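/- arXiv:1201.5494 — 6 statements merged into one kernel-verified Lean document; each statement's English description precedes it below -/
import Mathlib

section
/- Let λ > 0 and s = √λ. Then the solution w₂(·,λ) satisfies the integral equation w₂(x,λ) = (γ₁/δ₁)·w₁(π/2,λ)·cos((s/p₂)(x−π/2)) + (γ₂·p₂·w₁′(π/2,λ)/(s·δ₂))·sin((s/p₂)(x−π/2)) − (1/s)·∫_{π/2}ˣ (q(τ)/p₂)·sin((s/p₂)(x−τ))·w₂(τ−Δ(τ),λ) dτ for every x ∈ [π/2,π]. -/
/-!
On `[π/2, π]` the function `y = w₂` solves the forced oscillator `p₂² y'' + λ y = -F` with forcing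
`F t = q t · w₂(t - Δ t)`, so the formula is variation of constants: with `c = √λ / p₂`, the
function `t ↦ y t cos (c (x - t)) + y' t / c · sin (c (x - t))` has derivative
`sin (c (x - t)) · (y'' t + c² y t) / c`, and the fundamental theorem of calculus on `[π/2, x]`
gives the identity. The forcing is integrable because it is continuous on `(π/2, π]` with a
right limit at `π/2`: `q` has one by assumption, and `π/2 ≤ t - Δ t ≤ t` forces
`w₂(t - Δ t) → w₂(π/2)`.
-/

open Set Filter intervalIntegral Topology MeasureTheory

theorem intervalIntegrable_of_continuousOn_Ioc_of_tendsto {E : Type*} [NormedAddCommGroup E]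
    {f : ℝ → E} {a b : ℝ} {L : E} (hab : a ≤ b) (hf : ContinuousOn f (Ioc a b))
    (hlim : Tendsto f (𝓝[>] a) (𝓝 L)) : IntervalIntegrable f volume a b := by
  classical
  have hext : ContinuousOn (Function.update f a L) (Icc a b) := by
    rw [continuousOn_update_iff, Icc_sdiff_left]
    exact ⟨hf, fun _ => hlim.mono_left (nhdsWithin_mono _ Ioc_subset_Ioi_self)⟩
  refine (hext.intervalIntegrable_of_Icc hab).congr fun t ht => ?_
  rw [uIoc_of_le hab] at ht
  exact Function.update_of_ne ht.1.ne' _ _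

theorem eq_cos_add_sin_add_integral_of_hasDerivAt {y y' y'' g : ℝ → ℝ} {a x c : ℝ} (hc : c ≠ 0)
    (hy : ∀ t ∈ uIcc a x, HasDerivAt y (y' t) t) (hy' : ∀ t ∈ uIcc a x, HasDerivAt y' (y'' t) t)
    (hode : ∀ t ∈ uIcc a x, y'' t + c ^ 2 * y t = g t) (hg : IntervalIntegrable g volume a x) :
    y x = y a * Real.cos (c * (x - a)) + y' a / c * Real.sin (c * (x - a))
      + 1 / c * ∫ t in a..x, Real.sin (c * (x - t)) * g t := by
  set φ : ℝ → ℝ := fun t => y t * Real.cos (c * (x - t)) + y' t / c * Real.sin (c * (x - t))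
  have hφ_deriv : ∀ t ∈ uIcc a x, HasDerivAt φ (1 / c * (Real.sin (c * (x - t)) * g t)) t := by
    intro t ht
    have hu : HasDerivAt (fun τ => c * (x - τ)) (-c) t := by
      simpa using ((hasDerivAt_id t).const_sub x).const_mul c
    have h := ((hy t ht).mul (Real.hasDerivAt_cos _ |>.comp t hu)).add
      (((hy' t ht).div_const c).mul (Real.hasDerivAt_sin _ |>.comp t hu))
    refine h.congr_deriv ?_
    rw [← hode t ht]
    simp only [Function.comp_apply]
    field_simp
    ring
  have hint := integral_eq_sub_of_hasDerivAt hφ_deriv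
    ((hg.continuousOn_mul (by fun_prop)).const_mul (1 / c))
  rw [intervalIntegral.integral_const_mul] at hint
  simp only [φ, sub_self, mul_zero, Real.cos_zero, Real.sin_zero, mul_one, add_zero] at hint
  linarith

theorem eq_cos_add_sin_sub_integral_of_hasDerivAt {y y' y'' F : ℝ → ℝ} {a x p s : ℝ}
    (hp : p ≠ 0) (hs : s ≠ 0)
    (hy : ∀ t ∈ uIcc a x, HasDerivAt y (y' t) t) (hy' : ∀ t ∈ uIcc a x, HasDerivAt y' (y'' t) t)
    (hode : ∀ t ∈ uIcc a x, p ^ 2 * y'' t + F t + s ^ 2 * y t = 0)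
    (hF : IntervalIntegrable F volume a x) :
    y x = y a * Real.cos (s / p * (x - a)) + p * y' a / s * Real.sin (s / p * (x - a))
      - 1 / s * ∫ t in a..x, F t / p * Real.sin (s / p * (x - t)) := by
  have hg : ∀ t ∈ uIcc a x, y'' t + (s / p) ^ 2 * y t = -F t / p ^ 2 := fun t ht => by
    field_simp
    linarith [hode t ht]
  have hint : 1 / (s / p) * ∫ t in a..x, Real.sin (s / p * (x - t)) * (-F t / p ^ 2)
      = -(1 / s * ∫ t in a..x, F t / p * Real.sin (s / p * (x - t))) := by
    rw [← intervalIntegral.integral_const_mul, ← intervalIntegral.integral_const_mul,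
      ← intervalIntegral.integral_neg]
    congr 1 with t
    field_simp
  rw [eq_cos_add_sin_add_integral_of_hasDerivAt (div_ne_zero hs hp) hy hy' hg
    (hF.neg.div_const _), hint, div_div_eq_mul_div]
  ring

section Delay

variable {w Δ : ℝ → ℝ} {a b : ℝ}

theorem continuousOn_comp_sub_delay (hw : ContinuousOn w (Icc a b))
    (hΔ : ContinuousOn Δ (Ioc a b)) (hΔ0 : ∀ t ∈ Ioc a b, 0 ≤ Δ t)
    (hret : ∀ t ∈ Ioc a b, a ≤ t - Δ t) :
    ContinuousOn (fun t => w (t - Δ t)) (Ioc a b) :=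
  hw.comp (continuousOn_id.sub hΔ) fun t ht =>
    ⟨hret t ht, (sub_le_self t (hΔ0 t ht)).trans ht.2⟩

theorem tendsto_comp_sub_delay (hab : a < b) (hw : ContinuousOn w (Icc a b))
    (hΔ0 : ∀ t ∈ Ioc a b, 0 ≤ Δ t) (hret : ∀ t ∈ Ioc a b, a ≤ t - Δ t) :
    Tendsto (fun t => w (t - Δ t)) (𝓝[>] a) (𝓝 (w a)) := by
  have hIoc : Ioc a b ∈ 𝓝[>] a := Ioc_mem_nhdsGT hab
  have hsub : Tendsto (fun t => t - Δ t) (𝓝[>] a) (𝓝 a) :=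
    tendsto_of_tendsto_of_tendsto_of_le_of_le' tendsto_const_nhds
      (tendsto_nhdsWithin_of_tendsto_nhds tendsto_id)
      (eventually_of_mem hIoc hret) (eventually_of_mem hIoc fun t ht => sub_le_self t (hΔ0 t ht))
  refine (hw a (left_mem_Icc.2 hab.le)).tendsto.comp
    (tendsto_nhdsWithin_iff.2 ⟨hsub, eventually_of_mem hIoc fun t ht => ?_⟩)
  exact ⟨hret t ht, (sub_le_self t (hΔ0 t ht)).trans ht.2⟩

theorem intervalIntegrable_mul_comp_sub_delay {q : ℝ → ℝ} (hab : a < b)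
    (hq : ContinuousOn q (Ioc a b)) (hqlim : ∃ L, Tendsto q (𝓝[>] a) (𝓝 L))
    (hw : ContinuousOn w (Icc a b)) (hΔ : ContinuousOn Δ (Ioc a b))
    (hΔ0 : ∀ t ∈ Ioc a b, 0 ≤ Δ t) (hret : ∀ t ∈ Ioc a b, a ≤ t - Δ t) :
    IntervalIntegrable (fun t => q t * w (t - Δ t)) volume a b :=
  let ⟨_, hqL⟩ := hqlim
  intervalIntegrable_of_continuousOn_Ioc_of_tendsto hab.le
    (hq.mul (continuousOn_comp_sub_delay hw hΔ hΔ0 hret))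
    (hqL.mul (tendsto_comp_sub_delay hab hw hΔ0 hret))

end Delay

theorem stmt1_general
    (p2 γ1 γ2 δ1 δ2 : ℝ) (q Δ : ℝ → ℝ)
    (hp2 : 0 < p2)
    (hqc2 : ContinuousOn q (Set.Ioc (Real.pi/2) Real.pi))
    (hqlim2 : ∃ L : ℝ, Filter.Tendsto q (nhdsWithin (Real.pi/2) (Set.Ioi (Real.pi/2))) (nhds L))
    (hΔc2 : ContinuousOn Δ (Set.Ioc (Real.pi/2) Real.pi))
    (hΔnonneg : ∀ x ∈ Set.Ico (0:ℝ) (Real.pi/2) ∪ Set.Ioc (Real.pi/2) Real.pi, 0 ≤ Δ x)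
    (hret2 : ∀ x ∈ Set.Ioc (Real.pi/2) Real.pi, Real.pi/2 ≤ x - Δ x)
    (w1 w1' : ℝ → ℝ → ℝ)
    (w2 w2' w2'' : ℝ → ℝ → ℝ)
    (hw2d : ∀ lam : ℝ, 0 < lam → ∀ x ∈ Set.Icc (Real.pi/2) Real.pi,
      HasDerivAt (w2 lam) (w2' lam x) x ∧ HasDerivAt (w2' lam) (w2'' lam x) x)
    (hw2eq : ∀ lam : ℝ, 0 < lam → ∀ x ∈ Set.Icc (Real.pi/2) Real.pi,
      p2^2 * w2'' lam x + q x * w2 lam (x - Δ x) + lam * w2 lam x = 0)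
    (hw2ic : ∀ lam : ℝ, 0 < lam →
      w2 lam (Real.pi/2) = (γ1/δ1) * w1 lam (Real.pi/2) ∧
      w2' lam (Real.pi/2) = (γ2/δ2) * w1' lam (Real.pi/2))
    :
    ∀ lam : ℝ, 0 < lam → ∀ x ∈ Set.Icc (Real.pi/2) Real.pi,
      w2 lam x = (γ1/δ1) * w1 lam (Real.pi/2) * Real.cos (Real.sqrt lam / p2 * (x - Real.pi/2))
        + (γ2 * p2 * w1' lam (Real.pi/2) / (Real.sqrt lam * δ2)) * Real.sin (Real.sqrt lam / p2 * (x - Real.pi/2))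
        - (1 / Real.sqrt lam) *
          ∫ τ in (Real.pi/2)..x, (q τ / p2) * Real.sin (Real.sqrt lam / p2 * (x - τ)) * w2 lam (τ - Δ τ) := by
  intro lam hlam x hx
  have hpi : Real.pi / 2 < Real.pi := by linarith [Real.pi_pos]
  have hsub : uIcc (Real.pi / 2) x ⊆ Icc (Real.pi / 2) Real.pi := by
    rw [uIcc_of_le hx.1]
    exact Icc_subset_Icc_right hx.2
  have hw2c : ContinuousOn (w2 lam) (Icc (Real.pi / 2) Real.pi) :=
    fun t ht => (hw2d lam hlam t ht).1.continuousAt.continuousWithinAt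
  have hforce : IntervalIntegrable (fun t => q t * w2 lam (t - Δ t)) volume (Real.pi / 2) x :=
    (intervalIntegrable_mul_comp_sub_delay hpi hqc2 hqlim2 hw2c hΔc2
      (fun t ht => hΔnonneg t (Or.inr ht)) hret2).mono_set (by rwa [uIcc_of_le hpi.le])
  have hintegrand : ∫ t in (Real.pi / 2)..x,
        q t * w2 lam (t - Δ t) / p2 * Real.sin (Real.sqrt lam / p2 * (x - t))
      = ∫ t in (Real.pi / 2)..x,
          q t / p2 * Real.sin (Real.sqrt lam / p2 * (x - t)) * w2 lam (t - Δ t) :=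
    integral_congr fun t _ => by ring
  rw [eq_cos_add_sin_sub_integral_of_hasDerivAt hp2.ne' (Real.sqrt_pos.2 hlam).ne'
    (fun t ht => (hw2d lam hlam t (hsub ht)).1) (fun t ht => (hw2d lam hlam t (hsub ht)).2)
    (fun t ht => by simpa only [Real.sq_sqrt hlam.le] using hw2eq lam hlam t (hsub ht)) hforce,
    hintegrand, (hw2ic lam hlam).1, (hw2ic lam hlam).2]
  ring

theorem stmt1
    (p1 p2 γ1 γ2 δ1 δ2 d : ℝ) (q Δ : ℝ → ℝ)
    (hp1 : 0 < p1) (hp2 : 0 < p2)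
    (hδ1 : δ1 ≠ 0) (hδ2 : δ2 ≠ 0)
    (hγδ : γ1 * δ2 * p1 = γ2 * δ1 * p2)
    (hqc1 : ContinuousOn q (Set.Ico 0 (Real.pi/2)))
    (hqc2 : ContinuousOn q (Set.Ioc (Real.pi/2) Real.pi))
    (hqlim1 : ∃ L : ℝ, Filter.Tendsto q (nhdsWithin (Real.pi/2) (Set.Iio (Real.pi/2))) (nhds L))
    (hqlim2 : ∃ L : ℝ, Filter.Tendsto q (nhdsWithin (Real.pi/2) (Set.Ioi (Real.pi/2))) (nhds L))
    (hΔc1 : ContinuousOn Δ (Set.Ico 0 (Real.pi/2)))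
    (hΔc2 : ContinuousOn Δ (Set.Ioc (Real.pi/2) Real.pi))
    (hΔlim1 : ∃ L : ℝ, Filter.Tendsto Δ (nhdsWithin (Real.pi/2) (Set.Iio (Real.pi/2))) (nhds L))
    (hΔlim2 : ∃ L : ℝ, Filter.Tendsto Δ (nhdsWithin (Real.pi/2) (Set.Ioi (Real.pi/2))) (nhds L))
    (hΔnonneg : ∀ x ∈ Set.Ico (0:ℝ) (Real.pi/2) ∪ Set.Ioc (Real.pi/2) Real.pi, 0 ≤ Δ x)
    (hret1 : ∀ x ∈ Set.Ico (0:ℝ) (Real.pi/2), 0 ≤ x - Δ x)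
    (hret2 : ∀ x ∈ Set.Ioc (Real.pi/2) Real.pi, Real.pi/2 ≤ x - Δ x)
    (w1 w1' w1'' : ℝ → ℝ → ℝ)
    (hw1d : ∀ lam : ℝ, 0 < lam → ∀ x ∈ Set.Icc (0:ℝ) (Real.pi/2),
      HasDerivAt (w1 lam) (w1' lam x) x ∧ HasDerivAt (w1' lam) (w1'' lam x) x)
    (hw1eq : ∀ lam : ℝ, 0 < lam → ∀ x ∈ Set.Icc (0:ℝ) (Real.pi/2),
      p1^2 * w1'' lam x + q x * w1 lam (x - Δ x) + lam * w1 lam x = 0)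
    (hw1ic : ∀ lam : ℝ, 0 < lam → w1 lam 0 = p1 ∧ w1' lam 0 = -Real.sqrt lam)
    (w2 w2' w2'' : ℝ → ℝ → ℝ)
    (hw2d : ∀ lam : ℝ, 0 < lam → ∀ x ∈ Set.Icc (Real.pi/2) Real.pi,
      HasDerivAt (w2 lam) (w2' lam x) x ∧ HasDerivAt (w2' lam) (w2'' lam x) x)
    (hw2eq : ∀ lam : ℝ, 0 < lam → ∀ x ∈ Set.Icc (Real.pi/2) Real.pi,
      p2^2 * w2'' lam x + q x * w2 lam (x - Δ x) + lam * w2 lam x = 0)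
    (hw2ic : ∀ lam : ℝ, 0 < lam →
      w2 lam (Real.pi/2) = (γ1/δ1) * w1 lam (Real.pi/2) ∧
      w2' lam (Real.pi/2) = (γ2/δ2) * w1' lam (Real.pi/2))
    :
    ∀ lam : ℝ, 0 < lam → ∀ x ∈ Set.Icc (Real.pi/2) Real.pi,
      w2 lam x = (γ1/δ1) * w1 lam (Real.pi/2) * Real.cos (Real.sqrt lam / p2 * (x - Real.pi/2))
        + (γ2 * p2 * w1' lam (Real.pi/2) / (Real.sqrt lam * δ2)) * Real.sin (Real.sqrt lam / p2 * (x - Real.pi/2))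
        - (1 / Real.sqrt lam) *
          ∫ τ in (Real.pi/2)..x, (q τ / p2) * Real.sin (Real.sqrt lam / p2 * (x - τ)) * w2 lam (τ - Δ τ) :=
  stmt1_general p2 γ1 γ2 δ1 δ2 q Δ hp2 hqc2 hqlim2 hΔc2 hΔnonneg hret2 w1 w1' w2 w2' w2'' hw2d hw2eq
    hw2ic
end

section
/- (Theorem 1: eigenvalues are simple.) Let λ̃ > 0 be an eigenvalue of the problem (1)–(5) and let ũ be a corresponding eigenfunction, given by ũ₁ on [0,π/2) and ũ₂ on (π/2,π], i.e. ũ₁ solves p₁²y″(x)+q(x)y(x−Δ(x))+λ̃y(x)=0 on [0,π/2], ũ₂ solves p₂²y″(x)+q(x)y(x−Δ(x))+λ̃y(x)=0 on [π/2,π], ũ is not identically zero, and ũ satisfies √λ̃·ũ₁(0)+p₁·ũ₁′(0)=0, d·λ̃·ũ₂(π)+ũ₂′(π)=0, γ₁·ũ₁(π/2)=δ₁·ũ₂(π/2), and γ₂·ũ₁′(π/2)=δ₂·ũ₂′(π/2). Then there exists a single nonzero constant K such that ũ₁(x) = K·w₁(x,λ̃) for all x ∈ [0,π/2] and ũ₂(x)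 = K·w₂(x,λ̃) for all x ∈ [π/2,π]; in particular the eigenspace of λ̃ is one-dimensional. -/
/-!
Put `K = ũ₁(0) / p₁` and `v = ũ - K w`. The boundary condition at `0` gives
`v(0) = v'(0) = 0`, and once `v` vanishes on `[0, π/2]` the transmission conditions give
`v(π/2+) = v'(π/2+) = 0`. On each half `v` solves a linear equation with bounded coefficients
whose delayed argument `x - Δ(x)` only looks back, so `|v''| ≤ C (|v(x - Δ x)| + |v x|)`.
On a step `[x₀, x₁]` before which `v` already vanishes, the maximum `M` of `|v| + |v'|` then
satisfies `M ≤ (1 + 2C)(x₁ - x₀) M` by the mean value theorem, so `v ≡ 0` step by step.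
Finally `K ≠ 0` since `ũ` is nontrivial.
-/

open Set Filter Topology

theorem exists_abs_le_of_continuousOn_Ico_of_tendsto {q : ℝ → ℝ} {a b L : ℝ}
    (hc : ContinuousOn q (Ico a b)) (hl : Tendsto q (𝓝[<] b) (𝓝 L)) :
    ∃ Q, ∀ x ∈ Ico a b, |q x| ≤ Q := by
  obtain ⟨c, hcb, hnear⟩ :=
    mem_nhdsLT_iff_exists_Ioo_subset.1 (hl.abs.eventually_lt_const (lt_add_one |L|))
  obtain ⟨Q, hQ⟩ := isCompact_Icc.exists_bound_of_continuousOn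
    (hc.mono fun x hx => ⟨hx.1, hx.2.trans_lt hcb⟩ : ContinuousOn q (Icc a c))
  refine ⟨max Q (|L| + 1), fun x hx => ?_⟩
  rcases le_or_gt x c with hxc | hcx
  · exact (hQ x ⟨hx.1, hxc⟩).trans (le_max_left _ _)
  · exact (hnear ⟨hcx, hx.2⟩).le.trans (le_max_right _ _)

theorem exists_abs_le_of_continuousOn_Ioc_of_tendsto {q : ℝ → ℝ} {a b L : ℝ}
    (hc : ContinuousOn q (Ioc a b)) (hl : Tendsto q (𝓝[>] a) (𝓝 L)) :
    ∃ Q, ∀ x ∈ Ioc a b, |q x| ≤ Q := by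
  obtain ⟨Q, hQ⟩ := exists_abs_le_of_continuousOn_Ico_of_tendsto (a := -b) (b := -a)
    (hc.comp continuousOn_neg fun x hx => ⟨lt_neg.1 hx.2, neg_le.1 hx.1⟩)
    (hl.comp tendsto_neg_nhdsLT_neg)
  exact ⟨Q, fun x hx => by simpa using hQ (-x) ⟨neg_le_neg hx.2, neg_lt_neg hx.1⟩⟩

theorem abs_sub_le_mul_of_abs_deriv_le {f f' : ℝ → ℝ} {a b B : ℝ}
    (hf : ContinuousOn f (Icc a b)) (hf' : ∀ x ∈ Ioo a b, HasDerivAt f (f' x) x)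
    (hB : ∀ x ∈ Ioo a b, |f' x| ≤ B) : ∀ x ∈ Icc a b, |f x - f a| ≤ B * (x - a) := by
  rintro x ⟨hax, hxb⟩
  rcases hax.eq_or_lt with rfl | hax
  · simp
  obtain ⟨c, hc, hslope⟩ := exists_hasDerivAt_eq_slope f f' hax
    (hf.mono (Icc_subset_Icc_right hxb)) fun y hy => hf' y ⟨hy.1, hy.2.trans_le hxb⟩
  have hxa : 0 < x - a := sub_pos.2 hax
  calc |f x - f a| = |f' c| * (x - a) := by
        rw [hslope, abs_div, abs_of_pos hxa, div_mul_cancel₀ _ hxa.ne']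
    _ ≤ B * (x - a) := by gcongr; exact hB c ⟨hc.1, hc.2.trans_le hxb⟩

theorem eqOn_zero_of_delayed_ineq_step {a x₀ x₁ C : ℝ} {v v' v'' r : ℝ → ℝ}
    (ha : a ≤ x₀) (hx : x₀ ≤ x₁) (hC : 0 ≤ C) (hsmall : (1 + 2 * C) * (x₁ - x₀) < 1)
    (hd : ∀ x ∈ Icc x₀ x₁, HasDerivAt v (v' x) x ∧ HasDerivAt v' (v'' x) x)
    (hr : ∀ x ∈ Ioo x₀ x₁, r x ∈ Icc a x)
    (hbound : ∀ x ∈ Ioo x₀ x₁, |v'' x| ≤ C * (|v (r x)| + |v x|))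
    (hpast : ∀ x ∈ Icc a x₀, v x = 0) (hv'₀ : v' x₀ = 0) :
    ∀ x ∈ Icc x₀ x₁, v x = 0 ∧ v' x = 0 := by
  have hvc : ContinuousOn v (Icc x₀ x₁) := fun x hx =>
    (hd x hx).1.continuousAt.continuousWithinAt
  have hv'c : ContinuousOn v' (Icc x₀ x₁) := fun x hx =>
    (hd x hx).2.continuousAt.continuousWithinAt
  obtain ⟨xm, hxm, hmax⟩ :=
    isCompact_Icc.exists_isMaxOn (nonempty_Icc.2 hx) (hvc.abs.add hv'c.abs)
  set M := |v xm| + |v' xm|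
  have hM : ∀ x ∈ Icc x₀ x₁, |v x| + |v' x| ≤ M := fun x hx => hmax hx
  have hM0 : 0 ≤ M := by positivity
  have hv_le : ∀ x ∈ Icc x₀ x₁, |v x| ≤ M := fun x hx => by
    linarith [hM x hx, abs_nonneg (v' x)]
  have hv'_le : ∀ x ∈ Ioo x₀ x₁, |v' x| ≤ M := fun x hx => by
    linarith [hM x (Ioo_subset_Icc_self hx), abs_nonneg (v x)]
  have hv''_le : ∀ x ∈ Ioo x₀ x₁, |v'' x| ≤ 2 * C * M := by
    intro x hx
    have hrx : |v (r x)| ≤ M := by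
      rcases le_or_gt (r x) x₀ with h | h
      · rw [hpast _ ⟨(hr x hx).1, h⟩, abs_zero]
        exact hM0
      · exact hv_le _ ⟨h.le, (hr x hx).2.trans hx.2.le⟩
    calc |v'' x| ≤ C * (|v (r x)| + |v x|) := hbound x hx
      _ ≤ C * (M + M) := by gcongr; exact hv_le x (Ioo_subset_Icc_self hx)
      _ = 2 * C * M := by ring
  have hv_xm := abs_sub_le_mul_of_abs_deriv_le hvc
    (fun x hx => (hd x (Ioo_subset_Icc_self hx)).1) hv'_le xm hxm
  have hv'_xm := abs_sub_le_mul_of_abs_deriv_le hv'c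
    (fun x hx => (hd x (Ioo_subset_Icc_self hx)).2) hv''_le xm hxm
  rw [hpast x₀ ⟨ha, le_rfl⟩, sub_zero] at hv_xm
  rw [hv'₀, sub_zero] at hv'_xm
  have hM_le : M ≤ (1 + 2 * C) * (x₁ - x₀) * M := by
    nlinarith [mul_nonneg (mul_nonneg hM0 (by positivity : (0 : ℝ) ≤ 1 + 2 * C))
      (sub_nonneg.2 hxm.2)]
  have hM_zero : M ≤ 0 := by nlinarith
  intro x hx
  have hMx := hM x hx
  exact ⟨abs_nonpos_iff.1 (by linarith [abs_nonneg (v' x)]),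
    abs_nonpos_iff.1 (by linarith [abs_nonneg (v x)])⟩

theorem eqOn_zero_of_delayed_ineq {a b C : ℝ} {v v' v'' r : ℝ → ℝ} (hC : 0 ≤ C)
    (hd : ∀ x ∈ Icc a b, HasDerivAt v (v' x) x ∧ HasDerivAt v' (v'' x) x)
    (hr : ∀ x ∈ Ioo a b, r x ∈ Icc a x)
    (hbound : ∀ x ∈ Ioo a b, |v'' x| ≤ C * (|v (r x)| + |v x|))
    (hva : v a = 0) (hv'a : v' a = 0) :
    ∀ x ∈ Icc a b, v x = 0 ∧ v' x = 0 := by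
  set h := 1 / (2 * (1 + 2 * C))
  have hh : 0 < h := by positivity
  have hsmall : (1 + 2 * C) * h < 1 := by
    rw [mul_one_div, div_lt_one (by positivity)]
    linarith
  have hsteps : ∀ n : ℕ, ∀ x ∈ Icc a (min b (a + n * h)), v x = 0 ∧ v' x = 0 := by
    intro n
    induction n with
    | zero =>
      rintro x ⟨hax, hx⟩
      obtain rfl : x = a := le_antisymm (by simpa using hx.trans (min_le_right _ _)) hax
      exact ⟨hva, hv'a⟩
    | succ n ih =>
      rintro x ⟨hax, hx⟩
      set x₀ := min b (a + n * h)
      set x₁ := min b (a + (n + 1 : ℕ) * h)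
      rcases le_or_gt x x₀ with hx₀ | hx₀
      · exact ih x ⟨hax, hx₀⟩
      have hab : a ≤ b := hax.trans (hx.trans (min_le_left _ _))
      have hax₀ : a ≤ x₀ := le_min hab (by nlinarith [n.cast_nonneg (α := ℝ)])
      have hx₁ : x₁ ≤ x₀ + h := by
        rw [← min_add_add_right]
        exact min_le_min (by linarith) (by push_cast; linarith)
      have hsub : Icc x₀ x₁ ⊆ Icc a b := Icc_subset_Icc hax₀ (min_le_left _ _)
      have hsub' : Ioo x₀ x₁ ⊆ Ioo a b := Ioo_subset_Ioo hax₀ (min_le_left _ _)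
      refine eqOn_zero_of_delayed_ineq_step hax₀ (hx₀.le.trans hx) hC ?_
        (fun y hy => hd y (hsub hy)) (fun y hy => hr y (hsub' hy))
        (fun y hy => hbound y (hsub' hy)) (fun y hy => (ih y hy).1)
        (ih x₀ ⟨hax₀, le_rfl⟩).2 x ⟨hx₀.le, hx⟩
      calc (1 + 2 * C) * (x₁ - x₀) ≤ (1 + 2 * C) * h := by gcongr; linarith
        _ < 1 := hsmall
  obtain ⟨n, hn⟩ := exists_nat_ge ((b - a) / h)
  rintro x ⟨hax, hxb⟩
  refine hsteps n x ⟨hax, le_min hxb ?_⟩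
  rw [div_le_iff₀ hh] at hn
  linarith

theorem eqOn_const_mul_of_delayed_eq {a b P lam K Q : ℝ} {q r u u' u'' w w' w'' : ℝ → ℝ}
    (hP : P ≠ 0) (hq : ∀ x ∈ Ioo a b, |q x| ≤ Q) (hr : ∀ x ∈ Ioo a b, r x ∈ Icc a x)
    (hu : ∀ x ∈ Icc a b, HasDerivAt u (u' x) x ∧ HasDerivAt u' (u'' x) x)
    (hw : ∀ x ∈ Icc a b, HasDerivAt w (w' x) x ∧ HasDerivAt w' (w'' x) x)
    (hueq : ∀ x ∈ Ioo a b, P * u'' x + q x * u (r x) + lam * u x = 0)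
    (hweq : ∀ x ∈ Ioo a b, P * w'' x + q x * w (r x) + lam * w x = 0)
    (h₀ : u a = K * w a) (h₀' : u' a = K * w' a) :
    ∀ x ∈ Icc a b, u x = K * w x ∧ u' x = K * w' x := by
  have hbound : ∀ x ∈ Ioo a b, |u'' x - K * w'' x| ≤ (max Q 0 + |lam|) / |P| *
      (|u (r x) - K * w (r x)| + |u x - K * w x|) := by
    intro x hx
    have heq : P * (u'' x - K * w'' x) =
        -(q x * (u (r x) - K * w (r x)) + lam * (u x - K * w x)) := by
      linear_combination hueq x hx - K * hweq x hx
    rw [div_mul_eq_mul_div, le_div_iff₀ (abs_pos.2 hP), mul_comm, ← abs_mul, heq, abs_neg]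
    have hqx : |q x| ≤ max Q 0 := (hq x hx).trans (le_max_left Q 0)
    calc |q x * (u (r x) - K * w (r x)) + lam * (u x - K * w x)|
        ≤ |q x| * |u (r x) - K * w (r x)| + |lam| * |u x - K * w x| := by
          exact (abs_add_le _ _).trans_eq (by rw [abs_mul, abs_mul])
      _ ≤ (max Q 0 + |lam|) * (|u (r x) - K * w (r x)| + |u x - K * w x|) := by
          nlinarith [abs_nonneg (u (r x) - K * w (r x)), abs_nonneg (u x - K * w x),
            abs_nonneg lam, le_max_right Q 0]
  have hzero := eqOn_zero_of_delayed_ineq (v := fun x => u x - K * w x)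
    (v' := fun x => u' x - K * w' x) (by positivity)
    (fun x hx => ⟨(hu x hx).1.sub ((hw x hx).1.const_mul K),
      (hu x hx).2.sub ((hw x hx).2.const_mul K)⟩)
    hr hbound (sub_eq_zero.2 h₀) (sub_eq_zero.2 h₀')
  exact fun x hx => ⟨sub_eq_zero.1 (hzero x hx).1, sub_eq_zero.1 (hzero x hx).2⟩

theorem stmt2_general
    (p1 p2 γ1 γ2 δ1 δ2 : ℝ) (q Δ : ℝ → ℝ)
    (hp1 : 0 < p1) (hp2 : 0 < p2)
    (hδ1 : δ1 ≠ 0) (hδ2 : δ2 ≠ 0)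
    (hqc1 : ContinuousOn q (Set.Ico 0 (Real.pi/2)))
    (hqc2 : ContinuousOn q (Set.Ioc (Real.pi/2) Real.pi))
    (hqlim1 : ∃ L : ℝ, Filter.Tendsto q (nhdsWithin (Real.pi/2) (Set.Iio (Real.pi/2))) (nhds L))
    (hqlim2 : ∃ L : ℝ, Filter.Tendsto q (nhdsWithin (Real.pi/2) (Set.Ioi (Real.pi/2))) (nhds L))
    (hΔnonneg : ∀ x ∈ Set.Ico (0:ℝ) (Real.pi/2) ∪ Set.Ioc (Real.pi/2) Real.pi, 0 ≤ Δ x)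
    (hret1 : ∀ x ∈ Set.Ico (0:ℝ) (Real.pi/2), 0 ≤ x - Δ x)
    (hret2 : ∀ x ∈ Set.Ioc (Real.pi/2) Real.pi, Real.pi/2 ≤ x - Δ x)
    (w1 w1' w1'' : ℝ → ℝ → ℝ)
    (hw1d : ∀ lam : ℝ, 0 < lam → ∀ x ∈ Set.Icc (0:ℝ) (Real.pi/2),
      HasDerivAt (w1 lam) (w1' lam x) x ∧ HasDerivAt (w1' lam) (w1'' lam x) x)
    (hw1eq : ∀ lam : ℝ, 0 < lam → ∀ x ∈ Set.Icc (0:ℝ) (Real.pi/2),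
      p1^2 * w1'' lam x + q x * w1 lam (x - Δ x) + lam * w1 lam x = 0)
    (hw1ic : ∀ lam : ℝ, 0 < lam → w1 lam 0 = p1 ∧ w1' lam 0 = -Real.sqrt lam)
    (w2 w2' w2'' : ℝ → ℝ → ℝ)
    (hw2d : ∀ lam : ℝ, 0 < lam → ∀ x ∈ Set.Icc (Real.pi/2) Real.pi,
      HasDerivAt (w2 lam) (w2' lam x) x ∧ HasDerivAt (w2' lam) (w2'' lam x) x)
    (hw2eq : ∀ lam : ℝ, 0 < lam → ∀ x ∈ Set.Icc (Real.pi/2) Real.pi,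
      p2^2 * w2'' lam x + q x * w2 lam (x - Δ x) + lam * w2 lam x = 0)
    (hw2ic : ∀ lam : ℝ, 0 < lam →
      w2 lam (Real.pi/2) = (γ1/δ1) * w1 lam (Real.pi/2) ∧
      w2' lam (Real.pi/2) = (γ2/δ2) * w1' lam (Real.pi/2))
    (lam : ℝ) (hlam : 0 < lam)
    (u1 u1' u1'' u2 u2' u2'' : ℝ → ℝ)
    (hu1d : ∀ x ∈ Set.Icc (0:ℝ) (Real.pi/2),
      HasDerivAt u1 (u1' x) x ∧ HasDerivAt u1' (u1'' x) x)
    (hu1eq : ∀ x ∈ Set.Icc (0:ℝ) (Real.pi/2),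
      p1^2 * u1'' x + q x * u1 (x - Δ x) + lam * u1 x = 0)
    (hu2d : ∀ x ∈ Set.Icc (Real.pi/2) Real.pi,
      HasDerivAt u2 (u2' x) x ∧ HasDerivAt u2' (u2'' x) x)
    (hu2eq : ∀ x ∈ Set.Icc (Real.pi/2) Real.pi,
      p2^2 * u2'' x + q x * u2 (x - Δ x) + lam * u2 x = 0)
    (hnz : (∃ x ∈ Set.Ico (0:ℝ) (Real.pi/2), u1 x ≠ 0) ∨ (∃ x ∈ Set.Ioc (Real.pi/2) Real.pi, u2 x ≠ 0))
    (hbc0 : Real.sqrt lam * u1 0 + p1 * u1' 0 = 0)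
    (htr1 : γ1 * u1 (Real.pi/2) = δ1 * u2 (Real.pi/2))
    (htr2 : γ2 * u1' (Real.pi/2) = δ2 * u2' (Real.pi/2))
    :
    ∃ K : ℝ, K ≠ 0 ∧ (∀ x ∈ Set.Icc (0:ℝ) (Real.pi/2), u1 x = K * w1 lam x) ∧
      (∀ x ∈ Set.Icc (Real.pi/2) Real.pi, u2 x = K * w2 lam x) := by
  have hπ : 0 < Real.pi / 2 := by positivity
  have hmid : Real.pi / 2 ∈ Icc 0 (Real.pi / 2) := ⟨hπ.le, le_rfl⟩
  obtain ⟨Q1, hQ1⟩ := exists_abs_le_of_continuousOn_Ico_of_tendsto hqc1 hqlim1.choose_spec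
  obtain ⟨Q2, hQ2⟩ := exists_abs_le_of_continuousOn_Ioc_of_tendsto hqc2 hqlim2.choose_spec
  set K := u1 0 / p1 with hK
  have h1 := eqOn_const_mul_of_delayed_eq (K := K) (r := fun x => x - Δ x)
    (pow_ne_zero 2 hp1.ne') (fun x hx => hQ1 x (Ioo_subset_Ico_self hx))
    (fun x hx => ⟨hret1 x (Ioo_subset_Ico_self hx),
      sub_le_self x (hΔnonneg x (.inl (Ioo_subset_Ico_self hx)))⟩)
    hu1d (hw1d lam hlam) (fun x hx => hu1eq x (Ioo_subset_Icc_self hx))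
    (fun x hx => hw1eq lam hlam x (Ioo_subset_Icc_self hx))
    (by rw [(hw1ic lam hlam).1, hK, div_mul_cancel₀ _ hp1.ne'])
    (by rw [(hw1ic lam hlam).2, hK, div_mul_eq_mul_div, eq_div_iff hp1.ne']; linarith)
  have h2 := eqOn_const_mul_of_delayed_eq (K := K) (r := fun x => x - Δ x)
    (pow_ne_zero 2 hp2.ne') (fun x hx => hQ2 x (Ioo_subset_Ioc_self hx))
    (fun x hx => ⟨hret2 x (Ioo_subset_Ioc_self hx),
      sub_le_self x (hΔnonneg x (.inr (Ioo_subset_Ioc_self hx)))⟩)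
    hu2d (hw2d lam hlam) (fun x hx => hu2eq x (Ioo_subset_Icc_self hx))
    (fun x hx => hw2eq lam hlam x (Ioo_subset_Icc_self hx))
    (by rw [(hw2ic lam hlam).1, mul_left_comm, ← (h1 _ hmid).1, div_mul_eq_mul_div, htr1,
      mul_div_cancel_left₀ _ hδ1])
    (by rw [(hw2ic lam hlam).2, mul_left_comm, ← (h1 _ hmid).2, div_mul_eq_mul_div, htr2,
      mul_div_cancel_left₀ _ hδ2])
  refine ⟨K, fun hK0 => ?_, fun x hx => (h1 x hx).1, fun x hx => (h2 x hx).1⟩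
  rcases hnz with ⟨x, hx, hne⟩ | ⟨x, hx, hne⟩
  · exact hne (by rw [(h1 x (Ico_subset_Icc_self hx)).1, hK0, zero_mul])
  · exact hne (by rw [(h2 x (Ioc_subset_Icc_self hx)).1, hK0, zero_mul])

theorem stmt2
    (p1 p2 γ1 γ2 δ1 δ2 d : ℝ) (q Δ : ℝ → ℝ)
    (hp1 : 0 < p1) (hp2 : 0 < p2)
    (hδ1 : δ1 ≠ 0) (hδ2 : δ2 ≠ 0)
    (hγδ : γ1 * δ2 * p1 = γ2 * δ1 * p2)
    (hqc1 : ContinuousOn q (Set.Ico 0 (Real.pi/2)))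
    (hqc2 : ContinuousOn q (Set.Ioc (Real.pi/2) Real.pi))
    (hqlim1 : ∃ L : ℝ, Filter.Tendsto q (nhdsWithin (Real.pi/2) (Set.Iio (Real.pi/2))) (nhds L))
    (hqlim2 : ∃ L : ℝ, Filter.Tendsto q (nhdsWithin (Real.pi/2) (Set.Ioi (Real.pi/2))) (nhds L))
    (hΔc1 : ContinuousOn Δ (Set.Ico 0 (Real.pi/2)))
    (hΔc2 : ContinuousOn Δ (Set.Ioc (Real.pi/2) Real.pi))
    (hΔlim1 : ∃ L : ℝ, Filter.Tendsto Δ (nhdsWithin (Real.pi/2) (Set.Iio (Real.pi/2))) (nhds L))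
    (hΔlim2 : ∃ L : ℝ, Filter.Tendsto Δ (nhdsWithin (Real.pi/2) (Set.Ioi (Real.pi/2))) (nhds L))
    (hΔnonneg : ∀ x ∈ Set.Ico (0:ℝ) (Real.pi/2) ∪ Set.Ioc (Real.pi/2) Real.pi, 0 ≤ Δ x)
    (hret1 : ∀ x ∈ Set.Ico (0:ℝ) (Real.pi/2), 0 ≤ x - Δ x)
    (hret2 : ∀ x ∈ Set.Ioc (Real.pi/2) Real.pi, Real.pi/2 ≤ x - Δ x)
    (habs1 : |γ1| + |δ1| ≠ 0) (habs2 : |γ2| + |δ2| ≠ 0)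
    (w1 w1' w1'' : ℝ → ℝ → ℝ)
    (hw1d : ∀ lam : ℝ, 0 < lam → ∀ x ∈ Set.Icc (0:ℝ) (Real.pi/2),
      HasDerivAt (w1 lam) (w1' lam x) x ∧ HasDerivAt (w1' lam) (w1'' lam x) x)
    (hw1eq : ∀ lam : ℝ, 0 < lam → ∀ x ∈ Set.Icc (0:ℝ) (Real.pi/2),
      p1^2 * w1'' lam x + q x * w1 lam (x - Δ x) + lam * w1 lam x = 0)
    (hw1ic : ∀ lam : ℝ, 0 < lam → w1 lam 0 = p1 ∧ w1' lam 0 = -Real.sqrt lam)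
    (w2 w2' w2'' : ℝ → ℝ → ℝ)
    (hw2d : ∀ lam : ℝ, 0 < lam → ∀ x ∈ Set.Icc (Real.pi/2) Real.pi,
      HasDerivAt (w2 lam) (w2' lam x) x ∧ HasDerivAt (w2' lam) (w2'' lam x) x)
    (hw2eq : ∀ lam : ℝ, 0 < lam → ∀ x ∈ Set.Icc (Real.pi/2) Real.pi,
      p2^2 * w2'' lam x + q x * w2 lam (x - Δ x) + lam * w2 lam x = 0)
    (hw2ic : ∀ lam : ℝ, 0 < lam →
      w2 lam (Real.pi/2) = (γ1/δ1) * w1 lam (Real.pi/2) ∧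
      w2' lam (Real.pi/2) = (γ2/δ2) * w1' lam (Real.pi/2))
    (lam : ℝ) (hlam : 0 < lam)
    (u1 u1' u1'' u2 u2' u2'' : ℝ → ℝ)
    (hu1d : ∀ x ∈ Set.Icc (0:ℝ) (Real.pi/2),
      HasDerivAt u1 (u1' x) x ∧ HasDerivAt u1' (u1'' x) x)
    (hu1eq : ∀ x ∈ Set.Icc (0:ℝ) (Real.pi/2),
      p1^2 * u1'' x + q x * u1 (x - Δ x) + lam * u1 x = 0)
    (hu2d : ∀ x ∈ Set.Icc (Real.pi/2) Real.pi,
      HasDerivAt u2 (u2' x) x ∧ HasDerivAt u2' (u2'' x) x)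
    (hu2eq : ∀ x ∈ Set.Icc (Real.pi/2) Real.pi,
      p2^2 * u2'' x + q x * u2 (x - Δ x) + lam * u2 x = 0)
    (hnz : (∃ x ∈ Set.Ico (0:ℝ) (Real.pi/2), u1 x ≠ 0) ∨ (∃ x ∈ Set.Ioc (Real.pi/2) Real.pi, u2 x ≠ 0))
    (hbc0 : Real.sqrt lam * u1 0 + p1 * u1' 0 = 0)
    (hbcpi : d * lam * u2 Real.pi + u2' Real.pi = 0)
    (htr1 : γ1 * u1 (Real.pi/2) = δ1 * u2 (Real.pi/2))
    (htr2 : γ2 * u1' (Real.pi/2) = δ2 * u2' (Real.pi/2))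
    :
    ∃ K : ℝ, K ≠ 0 ∧ (∀ x ∈ Set.Icc (0:ℝ) (Real.pi/2), u1 x = K * w1 lam x) ∧
      (∀ x ∈ Set.Icc (Real.pi/2) Real.pi, u2 x = K * w2 lam x) :=
  stmt2_general p1 p2 γ1 γ2 δ1 δ2 q Δ hp1 hp2 hδ1 hδ2 hqc1 hqc2 hqlim1 hqlim2 hΔnonneg hret1 hret2
    w1 w1' w1'' hw1d hw1eq hw1ic w2 w2' w2'' hw2d hw2eq hw2ic lam hlam u1 u1' u1'' u2 u2' u2'' hu1d
    hu1eq hu2d hu2eq hnz hbc0 htr1 htr2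
end

section
/- (Lemma 2, part 1.) If λ ≥ 4q₁², then the solution w₁(·,λ) satisfies |w₁(x,λ)| ≤ 2√2·p₁ for all x ∈ [0,π/2]. -/
/-!
With the energy `E = λ w² + p² w'²` the equation gives `E' = -2 q w' w(x - Δ x)`. Let `M = E(x₀)`
be the maximum of `E` on `[0, π/2]`; as `x - Δ x` stays in that interval, `√λ |w(x - Δ x)| ≤ √M`,
while `p |w'| ≤ √E`. Hence `(√E)' ≤ |q| √M / (p √λ)`, and integrating over `[0, x₀]` gives
`√M - √E(0) ≤ √M q₁ / √λ ≤ √M / 2`. So `M ≤ 4 E(0) = 8 λ p²`, and `λ w² ≤ E` yields the bound.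
Where `E` vanishes `√E` is not differentiable, so one integrates `√(E + ε)` and lets `ε → 0`.
-/

open Set Filter intervalIntegral Topology MeasureTheory

theorem integrableOn_Icc_of_continuousOn_Ico_of_tendsto {E : Type*} [NormedAddCommGroup E]
    {f : ℝ → E} {a b : ℝ} {L : E} (hf : ContinuousOn f (Ico a b))
    (hL : Tendsto f (𝓝[<] b) (𝓝 L)) : IntegrableOn f (Icc a b) := by
  classical
  have hcont : ContinuousOn (Function.update f b L) (Icc a b) := by
    rw [continuousOn_update_iff, Icc_sdiff_right]
    exact ⟨hf, fun _ => hL.mono_left (nhdsWithin_mono _ fun _ hx => hx.2)⟩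
  have hEq : EqOn (Function.update f b L) f (Ico a b) := fun x hx =>
    Function.update_of_ne hx.2.ne _ _
  rw [integrableOn_Icc_iff_integrableOn_Ico]
  exact (hcont.integrableOn_Icc.mono_set Ico_subset_Icc_self).congr_fun hEq measurableSet_Ico

theorem sqrt_sub_sqrt_le_integral_of_deriv_le {E E' φ : ℝ → ℝ} {a b : ℝ} (hab : a ≤ b)
    (hE : ∀ x ∈ Icc a b, 0 ≤ E x) (hc : ContinuousOn E (Icc a b))
    (hd : ∀ x ∈ Ioo a b, HasDerivAt E (E' x) x) (hφ : IntegrableOn φ (Icc a b))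
    (hφ0 : ∀ x ∈ Ioo a b, 0 ≤ φ x) (hle : ∀ x ∈ Ioo a b, E' x ≤ 2 * φ x * √(E x)) :
    √(E b) - √(E a) ≤ ∫ x in a..b, φ x := by
  have hε : ∀ ε > 0, √(E b + ε) - √(E a + ε) ≤ ∫ x in a..b, φ x := by
    intro ε hεpos
    refine sub_le_integral_of_hasDeriv_right_of_le hab (hc.add continuousOn_const).sqrt
      (fun x hx => (((hd x hx).add_const ε).sqrt ?_).hasDerivWithinAt) hφ (fun x hx => ?_)
    · linarith [hE x (Ioo_subset_Icc_self hx)]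
    · have hEx := hE x (Ioo_subset_Icc_self hx)
      have hpos : 0 < √(E x + ε) := Real.sqrt_pos.2 (by linarith)
      rw [div_le_iff₀ (by positivity)]
      calc E' x ≤ 2 * φ x * √(E x) := hle x hx
        _ ≤ 2 * φ x * √(E x + ε) := by
          gcongr
          · linarith [hφ0 x hx]
          · linarith
        _ = φ x * (2 * √(E x + ε)) := by ring
  have hlim :
      Tendsto (fun ε => √(E b + ε) - √(E a + ε)) (𝓝[>] 0) (𝓝 (√(E b) - √(E a))) := by
    have hcont : Continuous (fun ε => √(E b + ε) - √(E a + ε)) := by fun_prop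
    simpa using (hcont.tendsto 0).mono_left nhdsWithin_le_nhds
  exact le_of_tendsto hlim (eventually_nhdsWithin_of_forall hε)

section Energy

variable {lam p a b : ℝ} {q Δ w w' w'' : ℝ → ℝ}

def energy (lam p : ℝ) (w w' : ℝ → ℝ) (x : ℝ) : ℝ := lam * w x ^ 2 + p ^ 2 * w' x ^ 2

theorem energy_nonneg (hlam : 0 ≤ lam) (x : ℝ) : 0 ≤ energy lam p w w' x := by
  unfold energy; positivity

theorem sqrt_mul_abs_le_sqrt_energy (hlam : 0 ≤ lam) (x : ℝ) :
    √lam * |w x| ≤ √(energy lam p w w' x) :=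
  calc √lam * |w x| = √(lam * w x ^ 2) := by rw [Real.sqrt_mul hlam, Real.sqrt_sq_eq_abs]
    _ ≤ √(energy lam p w w' x) :=
      Real.sqrt_le_sqrt (le_add_of_nonneg_right (by positivity : 0 ≤ p ^ 2 * w' x ^ 2))

theorem mul_abs_le_sqrt_energy (hp : 0 ≤ p) (hlam : 0 ≤ lam) (x : ℝ) :
    p * |w' x| ≤ √(energy lam p w w' x) :=
  calc p * |w' x| = √(p ^ 2 * w' x ^ 2) := by
        rw [Real.sqrt_mul (sq_nonneg p), Real.sqrt_sq hp, Real.sqrt_sq_eq_abs]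
    _ ≤ √(energy lam p w w' x) :=
      Real.sqrt_le_sqrt (le_add_of_nonneg_left (by positivity : 0 ≤ lam * w x ^ 2))

theorem hasDerivAt_energy {x r : ℝ} (hw : HasDerivAt w (w' x) x) (hw' : HasDerivAt w' (w'' x) x)
    (heq : p ^ 2 * w'' x + r + lam * w x = 0) :
    HasDerivAt (energy lam p w w') (-2 * w' x * r) x :=
  (((hw.fun_pow 2).const_mul lam).add ((hw'.fun_pow 2).const_mul (p ^ 2))).congr_deriv
    (by push_cast; linear_combination (2 * w' x) * heq)

theorem energy_le_four_mul_energy_left (hp : 0 < p) (hlam : 0 < lam) (hab : a ≤ b)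
    (hd : ∀ x ∈ Icc a b, HasDerivAt w (w' x) x ∧ HasDerivAt w' (w'' x) x)
    (heq : ∀ x ∈ Ico a b, p ^ 2 * w'' x + q x * w (x - Δ x) + lam * w x = 0)
    (hret : ∀ x ∈ Ico a b, x - Δ x ∈ Icc a b) (hq : IntegrableOn q (Icc a b))
    (hQ : 2 * ∫ t in a..b, |q t| ≤ p * √lam) :
    ∀ x ∈ Icc a b, energy lam p w w' x ≤ 4 * energy lam p w w' a := by
  set E := energy lam p w w'
  have hEc : ContinuousOn E (Icc a b) := by
    have hw : ContinuousOn w (Icc a b) := fun x hx =>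
      (hd x hx).1.continuousAt.continuousWithinAt
    have hw' : ContinuousOn w' (Icc a b) := fun x hx =>
      (hd x hx).2.continuousAt.continuousWithinAt
    exact (continuousOn_const.mul (hw.pow 2)).add (continuousOn_const.mul (hw'.pow 2))
  obtain ⟨x₀, hx₀, hmax⟩ := isCompact_Icc.exists_isMaxOn (nonempty_Icc.2 hab) hEc
  set M := E x₀
  suffices hM : M ≤ 4 * E a from fun x hx => (hmax hx).trans hM
  set c := √M / (p * √lam)
  have hsub : Icc a x₀ ⊆ Icc a b := Icc_subset_Icc_right hx₀.2
  have hdE :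
      ∀ x ∈ Ioo a x₀, -2 * w' x * (q x * w (x - Δ x)) ≤ 2 * (c * |q x|) * √(E x) := by
    intro x hx
    have hx' : x ∈ Ico a b := ⟨hx.1.le, hx.2.trans_le hx₀.2⟩
    have hw' := mul_abs_le_sqrt_energy (w := w) (w' := w') hp.le hlam.le x
    have hw : √lam * |w (x - Δ x)| ≤ √M := (sqrt_mul_abs_le_sqrt_energy hlam.le _).trans
      (Real.sqrt_le_sqrt (hmax (hret x hx')))
    have hsl : 0 < √lam := Real.sqrt_pos.2 hlam
    calc -2 * w' x * (q x * w (x - Δ x)) ≤ 2 * |q x| * (|w' x| * |w (x - Δ x)|) := by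
          have h := neg_abs_le (q x * (w' x * w (x - Δ x)))
          rw [abs_mul, abs_mul] at h
          linarith
      _ = 2 * |q x| * ((p * |w' x|) * (√lam * |w (x - Δ x)|)) / (p * √lam) := by field_simp
      _ ≤ 2 * |q x| * (√(E x) * √M) / (p * √lam) := by gcongr
      _ = 2 * (c * |q x|) * √(E x) := by ring
  have hgrowth := sqrt_sub_sqrt_le_integral_of_deriv_le hx₀.1
    (fun x _ => energy_nonneg hlam.le x) (hEc.mono hsub)
    (fun x hx => hasDerivAt_energy (hd x (hsub (Ioo_subset_Icc_self hx))).1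
      (hd x (hsub (Ioo_subset_Icc_self hx))).2 (heq x ⟨hx.1.le, hx.2.trans_le hx₀.2⟩))
    (((hq.mono_set hsub).abs).const_mul c) (fun _ _ => by positivity) hdE
  have hint : ∫ t in a..x₀, c * |q t| ≤ √M / 2 := by
    have hmono : ∫ t in a..x₀, |q t| ≤ ∫ t in a..b, |q t| :=
      integral_mono_interval le_rfl hx₀.1 hx₀.2 (Eventually.of_forall fun _ => abs_nonneg _)
        ((intervalIntegrable_iff_integrableOn_Icc_of_le hab).2 hq.abs)
    rw [intervalIntegral.integral_const_mul]
    calc c * ∫ t in a..x₀, |q t| ≤ c * (p * √lam / 2) := by gcongr; linarith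
      _ = √M / 2 := by simp only [c]; field_simp
  have hsqrt : √M ≤ √(4 * E a) := by
    rw [Real.sqrt_mul' _ (energy_nonneg hlam.le a), show (4 : ℝ) = 2 ^ 2 by norm_num,
      Real.sqrt_sq zero_le_two]
    linarith
  have hEa : 0 ≤ E a := energy_nonneg hlam.le a
  exact (Real.sqrt_le_sqrt_iff (by positivity)).1 hsqrt

end Energy

theorem stmt3_general
    (p1 : ℝ) (q Δ : ℝ → ℝ)
    (hp1 : 0 < p1)
    (hqc1 : ContinuousOn q (Set.Ico 0 (Real.pi/2)))
    (hqlim1 : ∃ L : ℝ, Filter.Tendsto q (nhdsWithin (Real.pi/2) (Set.Iio (Real.pi/2))) (nhds L))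
    (hΔnonneg : ∀ x ∈ Set.Ico (0:ℝ) (Real.pi/2) ∪ Set.Ioc (Real.pi/2) Real.pi, 0 ≤ Δ x)
    (hret1 : ∀ x ∈ Set.Ico (0:ℝ) (Real.pi/2), 0 ≤ x - Δ x)
    (w1 w1' w1'' : ℝ → ℝ → ℝ)
    (hw1d : ∀ lam : ℝ, 0 < lam → ∀ x ∈ Set.Icc (0:ℝ) (Real.pi/2),
      HasDerivAt (w1 lam) (w1' lam x) x ∧ HasDerivAt (w1' lam) (w1'' lam x) x)
    (hw1eq : ∀ lam : ℝ, 0 < lam → ∀ x ∈ Set.Icc (0:ℝ) (Real.pi/2),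
      p1^2 * w1'' lam x + q x * w1 lam (x - Δ x) + lam * w1 lam x = 0)
    (hw1ic : ∀ lam : ℝ, 0 < lam → w1 lam 0 = p1 ∧ w1' lam 0 = -Real.sqrt lam)
    (lam : ℝ) (hlam : 0 < lam)
    (hlam4 : 4 * ((1/p1) * ∫ τ in (0:ℝ)..(Real.pi/2), |q τ|)^2 ≤ lam)
    :
    ∀ x ∈ Set.Icc (0:ℝ) (Real.pi/2), |w1 lam x| ≤ 2 * Real.sqrt 2 * p1 := by
  intro x hx
  obtain ⟨L, hL⟩ := hqlim1
  set Q := ∫ τ in (0:ℝ)..(Real.pi/2), |q τ|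
  have hQ : 2 * Q ≤ p1 * √lam := by
    have h : 2 * ((1/p1) * Q) ≤ √lam := Real.le_sqrt_of_sq_le (by linarith)
    calc 2 * Q = p1 * (2 * ((1/p1) * Q)) := by field_simp
      _ ≤ p1 * √lam := by gcongr
  have hret : ∀ x ∈ Ico 0 (Real.pi / 2), x - Δ x ∈ Icc 0 (Real.pi / 2) := fun x hx =>
    ⟨hret1 x hx, by linarith [hΔnonneg x (Or.inl hx), hx.2]⟩
  have hE := energy_le_four_mul_energy_left hp1 hlam (by positivity) (hw1d lam hlam)
    (fun x hx => hw1eq lam hlam x (Ico_subset_Icc_self hx)) hret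
    (integrableOn_Icc_of_continuousOn_Ico_of_tendsto hqc1 hL) hQ x hx
  have hE0 : energy lam p1 (w1 lam) (w1' lam) 0 = 2 * lam * p1 ^ 2 := by
    rw [energy, (hw1ic lam hlam).1, (hw1ic lam hlam).2, neg_sq, Real.sq_sqrt hlam.le]
    ring
  have hw : w1 lam x ^ 2 ≤ 8 * p1 ^ 2 := by
    have : lam * w1 lam x ^ 2 ≤ lam * (8 * p1 ^ 2) := by
      rw [hE0] at hE
      linarith [hE, show lam * w1 lam x ^ 2 ≤ energy lam p1 (w1 lam) (w1' lam) x from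
        le_add_of_nonneg_right (by positivity)]
    exact le_of_mul_le_mul_left this hlam
  calc |w1 lam x| ≤ √(8 * p1 ^ 2) := Real.abs_le_sqrt hw
    _ = 2 * √2 * p1 := by
      rw [show (8 : ℝ) * p1 ^ 2 = (2 * √2 * p1) ^ 2 by
        rw [mul_pow, mul_pow, Real.sq_sqrt zero_le_two]; ring]
      exact Real.sqrt_sq (by positivity)

theorem stmt3
    (p1 p2 γ1 γ2 δ1 δ2 d : ℝ) (q Δ : ℝ → ℝ)
    (hp1 : 0 < p1) (hp2 : 0 < p2)
    (hδ1 : δ1 ≠ 0) (hδ2 : δ2 ≠ 0)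
    (hγδ : γ1 * δ2 * p1 = γ2 * δ1 * p2)
    (hqc1 : ContinuousOn q (Set.Ico 0 (Real.pi/2)))
    (hqc2 : ContinuousOn q (Set.Ioc (Real.pi/2) Real.pi))
    (hqlim1 : ∃ L : ℝ, Filter.Tendsto q (nhdsWithin (Real.pi/2) (Set.Iio (Real.pi/2))) (nhds L))
    (hqlim2 : ∃ L : ℝ, Filter.Tendsto q (nhdsWithin (Real.pi/2) (Set.Ioi (Real.pi/2))) (nhds L))
    (hΔc1 : ContinuousOn Δ (Set.Ico 0 (Real.pi/2)))
    (hΔc2 : ContinuousOn Δ (Set.Ioc (Real.pi/2) Real.pi))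
    (hΔlim1 : ∃ L : ℝ, Filter.Tendsto Δ (nhdsWithin (Real.pi/2) (Set.Iio (Real.pi/2))) (nhds L))
    (hΔlim2 : ∃ L : ℝ, Filter.Tendsto Δ (nhdsWithin (Real.pi/2) (Set.Ioi (Real.pi/2))) (nhds L))
    (hΔnonneg : ∀ x ∈ Set.Ico (0:ℝ) (Real.pi/2) ∪ Set.Ioc (Real.pi/2) Real.pi, 0 ≤ Δ x)
    (hret1 : ∀ x ∈ Set.Ico (0:ℝ) (Real.pi/2), 0 ≤ x - Δ x)
    (hret2 : ∀ x ∈ Set.Ioc (Real.pi/2) Real.pi, Real.pi/2 ≤ x - Δ x)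
    (w1 w1' w1'' : ℝ → ℝ → ℝ)
    (hw1d : ∀ lam : ℝ, 0 < lam → ∀ x ∈ Set.Icc (0:ℝ) (Real.pi/2),
      HasDerivAt (w1 lam) (w1' lam x) x ∧ HasDerivAt (w1' lam) (w1'' lam x) x)
    (hw1eq : ∀ lam : ℝ, 0 < lam → ∀ x ∈ Set.Icc (0:ℝ) (Real.pi/2),
      p1^2 * w1'' lam x + q x * w1 lam (x - Δ x) + lam * w1 lam x = 0)
    (hw1ic : ∀ lam : ℝ, 0 < lam → w1 lam 0 = p1 ∧ w1' lam 0 = -Real.sqrt lam)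
    (lam : ℝ) (hlam : 0 < lam)
    (hlam4 : 4 * ((1/p1) * ∫ τ in (0:ℝ)..(Real.pi/2), |q τ|)^2 ≤ lam)
    :
    ∀ x ∈ Set.Icc (0:ℝ) (Real.pi/2), |w1 lam x| ≤ 2 * Real.sqrt 2 * p1 :=
  stmt3_general p1 q Δ hp1 hqc1 hqlim1 hΔnonneg hret1 w1 w1' w1'' hw1d hw1eq hw1ic lam hlam hlam4
end

section
/- (Asymptotics (25) for w₁.) There exist constants C > 0 and s₀ > 0 such that for all s ≥ s₀ and all x ∈ [0,π/2], |w₁(x,s²) − √2·p₁·cos(s·x/p₁ + π/4)| ≤ C/s. -/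
/-!
The difference `r = w₁ - v` from the undelayed solution `v x = √2 p₁ cos (s x / p₁ + π / 4)`,
which has the same initial data, solves the forced oscillator
`r'' + (s / p₁)² r = -q(x) w₁(x - Δ x) / p₁²` with `r(0) = r'(0) = 0`. The energy
`E = r² + (p₁ r' / s)²` has `|E'| ≤ 2 (p₁ / s) √E · |forcing|`. Since the delayed argument stays in
`[0, π/2]`, the forcing is at most `Q (√M + √2 p₁) / p₁²`, where `Q` bounds `|q|` and `M = max E`.
Integrating over `[0, π/2]` gives `M ≤ (π Q / (p₁ s)) √M (√M + √2 p₁)`, so `√M = O(1/s)`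
once `s` is large.
-/

open Set Filter Real Topology

theorem ContinuousOn.exists_bound_Ico_of_tendsto {E : Type*} [SeminormedAddCommGroup E]
    {f : ℝ → E} {a b : ℝ} {L : E} (hf : ContinuousOn f (Ico a b))
    (hlim : Tendsto f (𝓝[<] b) (𝓝 L)) : ∃ Q, ∀ x ∈ Ico a b, ‖f x‖ ≤ Q := by
  obtain ⟨c, hcb, hnear⟩ := mem_nhdsLT_iff_exists_Ioo_subset.1
    (hlim.norm.eventually_lt_const (lt_add_one ‖L‖))
  obtain ⟨Q, hQ⟩ := isCompact_Icc.exists_bound_of_continuousOn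
    (hf.mono (Icc_subset_Ico_right hcb))
  refine ⟨max Q (‖L‖ + 1), fun x hx => ?_⟩
  rcases le_or_gt x c with hxc | hcx
  · exact (hQ x ⟨hx.1, hxc⟩).trans (le_max_left _ _)
  · exact (hnear ⟨hcx, hx.2⟩ : ‖f x‖ < ‖L‖ + 1).le.trans (le_max_right _ _)

theorem hasDerivAt_mul_cos_affine (c ω φ x : ℝ) :
    HasDerivAt (fun y => c * cos (ω * y + φ)) (-(c * ω) * sin (ω * x + φ)) x := by
  refine ((((hasDerivAt_id x).const_mul ω).add_const φ).cos.const_mul c).congr_deriv ?_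
  simp only [id, mul_one]; ring

theorem hasDerivAt_mul_sin_affine (c ω φ x : ℝ) :
    HasDerivAt (fun y => c * sin (ω * y + φ)) (c * ω * cos (ω * x + φ)) x := by
  refine ((((hasDerivAt_id x).const_mul ω).add_const φ).sin.const_mul c).congr_deriv ?_
  simp only [id, mul_one]; ring

theorem le_two_mul_mul_of_sq_le_mul_mul_add {m a b : ℝ} (hm : 0 ≤ m) (ha : 0 ≤ a)
    (ha' : a ≤ 1 / 2) (hb : 0 ≤ b) (h : m ^ 2 ≤ a * m * (m + b)) : m ≤ 2 * a * b := by
  rcases hm.eq_or_lt with rfl | hm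
  · positivity
  · nlinarith

section ForcedOscillator

variable {r r' r'' : ℝ → ℝ} {ω a b x : ℝ}

theorem hasDerivAt_oscillator_energy (hω : ω ≠ 0) (hr : HasDerivAt r (r' x) x)
    (hr' : HasDerivAt r' (r'' x) x) :
    HasDerivAt (fun y => r y ^ 2 + (r' y / ω) ^ 2)
      (2 * r' x * (r'' x + ω ^ 2 * r x) / ω ^ 2) x := by
  refine ((hr.fun_pow 2).add ((hr'.div_const ω).fun_pow 2)).congr_deriv ?_
  simp only [Nat.cast_ofNat, Nat.add_one_sub_one, pow_one]
  field_simp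
  ring

theorem oscillator_energy_le_of_forcing_le {M F : ℝ} (hω : 0 < ω)
    (hd : ∀ x ∈ Icc a b, HasDerivAt r (r' x) x ∧ HasDerivAt r' (r'' x) x)
    (ha : r a = 0) (ha' : r' a = 0) (hM : ∀ x ∈ Icc a b, r x ^ 2 + (r' x / ω) ^ 2 ≤ M)
    (hF : ∀ x ∈ Ico a b, |r'' x + ω ^ 2 * r x| ≤ F) :
    ∀ x ∈ Icc a b, r x ^ 2 + (r' x / ω) ^ 2 ≤ 2 * F * √M / ω * (x - a) := by
  intro x hx
  have hE := norm_image_sub_le_of_norm_deriv_le_segment' (C := 2 * F * √M / ω)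
    (fun y hy => (hasDerivAt_oscillator_energy hω.ne' (hd y hy).1 (hd y hy).2).hasDerivWithinAt)
    (fun y hy => ?_) x hx
  · norm_num [ha, ha'] at hE
    exact (le_abs_self _).trans hE
  have hr' : |r' y / ω| ≤ √M := abs_le_sqrt
    ((le_add_of_nonneg_left (sq_nonneg (r y))).trans (hM y (Ico_subset_Icc_self hy)))
  rw [abs_div, abs_of_pos hω, div_le_iff₀ hω] at hr'
  rw [Real.norm_eq_abs, abs_div, abs_mul, abs_mul, abs_two, abs_of_pos (by positivity : 0 < ω ^ 2),
    div_le_iff₀ (by positivity)]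
  calc 2 * |r' y| * |r'' y + ω ^ 2 * r y| ≤ 2 * (√M * ω) * F := by
        gcongr
        exact hF y hy
    _ = 2 * F * √M / ω * ω ^ 2 := by field_simp

theorem abs_le_of_forcing_le_delayed {τ : ℝ → ℝ} {K c : ℝ} (hω : 0 < ω) (hK : 0 ≤ K)
    (hc : 0 ≤ c) (hsmall : 4 * K * (b - a) ≤ ω)
    (hd : ∀ x ∈ Icc a b, HasDerivAt r (r' x) x ∧ HasDerivAt r' (r'' x) x)
    (ha : r a = 0) (ha' : r' a = 0) (hτ : ∀ x ∈ Ico a b, τ x ∈ Icc a b)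
    (hF : ∀ x ∈ Ico a b, |r'' x + ω ^ 2 * r x| ≤ K * (|r (τ x)| + c)) :
    ∀ x ∈ Icc a b, |r x| ≤ 4 * K * (b - a) * c / ω := by
  intro x hx
  obtain ⟨x₀, hx₀, hmax⟩ := isCompact_Icc.exists_isMaxOn (nonempty_Icc.2 (hx.1.trans hx.2))
    (fun y hy => ((hasDerivAt_oscillator_energy hω.ne' (hd y hy).1 (hd y hy).2).continuousAt
      |>.continuousWithinAt))
  set M := r x₀ ^ 2 + (r' x₀ / ω) ^ 2
  have hM : ∀ y ∈ Icc a b, r y ^ 2 + (r' y / ω) ^ 2 ≤ M := fun y hy => hmax hy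
  have hrM : ∀ y ∈ Icc a b, |r y| ≤ √M := fun y hy =>
    abs_le_sqrt ((le_add_of_nonneg_right (sq_nonneg _)).trans (hM y hy))
  have hE := oscillator_energy_le_of_forcing_le (F := K * (√M + c)) hω hd ha ha' hM
    (fun y hy => (hF y hy).trans (by gcongr; exact hrM _ (hτ y hy))) x₀ hx₀
  have hMle : √M ^ 2 ≤ 2 * K * (b - a) / ω * √M * (√M + c) := by
    rw [sq_sqrt (hM x₀ hx₀ |>.trans' (by positivity))]
    calc M ≤ 2 * (K * (√M + c)) * √M / ω * (x₀ - a) := hE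
      _ ≤ 2 * (K * (√M + c)) * √M / ω * (b - a) := by gcongr; exact hx₀.2
      _ = 2 * K * (b - a) / ω * √M * (√M + c) := by ring
  calc |r x| ≤ √M := hrM x hx
    _ ≤ 2 * (2 * K * (b - a) / ω) * c :=
      le_two_mul_mul_of_sq_le_mul_mul_add (sqrt_nonneg M)
        (div_nonneg (by nlinarith [hx.1.trans hx.2]) hω.le)
        (by rw [div_le_iff₀ hω]; linarith) hc hMle
    _ = 4 * K * (b - a) * c / ω := by ring

end ForcedOscillator

theorem abs_sub_cos_le_of_delay_ode {p s T Q : ℝ} {q τ w w' w'' : ℝ → ℝ} (hp : 0 < p)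
    (hQ0 : 0 ≤ Q) (hQ : ∀ x ∈ Ico 0 T, |q x| ≤ Q) (hs : 4 * T * Q / p < s)
    (hτ : ∀ x ∈ Ico 0 T, τ x ∈ Icc 0 T)
    (hd : ∀ x ∈ Icc 0 T, HasDerivAt w (w' x) x ∧ HasDerivAt w' (w'' x) x)
    (heq : ∀ x ∈ Icc 0 T, p ^ 2 * w'' x + q x * w (τ x) + s ^ 2 * w x = 0)
    (h0 : w 0 = p) (h0' : w' 0 = -s) :
    ∀ x ∈ Icc 0 T, |w x - √2 * p * cos (s * x / p + π / 4)| ≤ 4 * √2 * T * Q / s := by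
  intro x hx
  have hs0 : 0 < s := lt_of_le_of_lt (by have := hx.1.trans hx.2; positivity) hs
  set ω := s / p with hω
  simp only [mul_div_right_comm s _ p, ← hω]
  set c := √2 * p
  set r := fun y => w y - c * cos (ω * y + π / 4)
  set r' := fun y => w' y - -(c * ω) * sin (ω * y + π / 4)
  set r'' := fun y => w'' y + ω ^ 2 * (c * cos (ω * y + π / 4))
  have hrd : ∀ y ∈ Icc 0 T, HasDerivAt r (r' y) y ∧ HasDerivAt r' (r'' y) y := fun y hy =>
    ⟨(hd y hy).1.sub (hasDerivAt_mul_cos_affine c ω _ y),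
      ((hd y hy).2.sub ((hasDerivAt_mul_sin_affine _ ω _ y))).congr_deriv (by ring)⟩
  have h2 : √2 ^ 2 = 2 := sq_sqrt zero_le_two
  have hr0 : r 0 = 0 := by
    simp only [r, h0, mul_zero, zero_add, cos_pi_div_four, c]
    linear_combination (-p / 2) * h2
  have hr0' : r' 0 = 0 := by
    simp only [r', h0', mul_zero, zero_add, sin_pi_div_four, c, hω]
    field_simp
    rw [h2]
    ring
  have hforce : ∀ y ∈ Ico 0 T, |r'' y + ω ^ 2 * r y| ≤ Q / p ^ 2 * (|r (τ y)| + c) := by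
    intro y hy
    have hw : |w (τ y)| ≤ |r (τ y)| + c := by
      have hv : |c * cos (ω * τ y + π / 4)| ≤ c := by
        rw [abs_mul, abs_of_pos (by positivity)]
        exact mul_le_of_le_one_right (by positivity) (abs_cos_le_one _)
      linarith [abs_sub_abs_le_abs_sub (w (τ y)) (c * cos (ω * τ y + π / 4))]
    have hres : r'' y + ω ^ 2 * r y = -(q y * w (τ y)) / p ^ 2 := by
      simp only [r, r'', hω]
      field_simp
      linear_combination heq y (Ico_subset_Icc_self hy)
    rw [hres, abs_div, abs_neg, abs_mul, abs_of_pos (pow_pos hp 2), div_mul_eq_mul_div]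
    gcongr
    exact hQ y hy
  calc |r x| ≤ 4 * (Q / p ^ 2) * (T - 0) * c / ω :=
        abs_le_of_forcing_le_delayed (by positivity) (by positivity) (by positivity)
          (by rw [hω, show 4 * (Q / p ^ 2) * (T - 0) = 4 * T * Q / p / p by field_simp; ring]
              exact div_le_div_of_nonneg_right hs.le hp.le) hrd hr0 hr0' hτ hforce x hx
    _ = 4 * √2 * T * Q / s := by simp only [c, hω]; field_simp; ring

theorem stmt8_general
    (p1 : ℝ) (q Δ : ℝ → ℝ)
    (hp1 : 0 < p1)
    (hqc1 : ContinuousOn q (Set.Ico 0 (Real.pi/2)))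
    (hqlim1 : ∃ L : ℝ, Filter.Tendsto q (nhdsWithin (Real.pi/2) (Set.Iio (Real.pi/2))) (nhds L))
    (hΔnonneg : ∀ x ∈ Set.Ico (0:ℝ) (Real.pi/2) ∪ Set.Ioc (Real.pi/2) Real.pi, 0 ≤ Δ x)
    (hret1 : ∀ x ∈ Set.Ico (0:ℝ) (Real.pi/2), 0 ≤ x - Δ x)
    (w1 w1' w1'' : ℝ → ℝ → ℝ)
    (hw1d : ∀ lam : ℝ, 0 < lam → ∀ x ∈ Set.Icc (0:ℝ) (Real.pi/2),
      HasDerivAt (w1 lam) (w1' lam x) x ∧ HasDerivAt (w1' lam) (w1'' lam x) x)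
    (hw1eq : ∀ lam : ℝ, 0 < lam → ∀ x ∈ Set.Icc (0:ℝ) (Real.pi/2),
      p1^2 * w1'' lam x + q x * w1 lam (x - Δ x) + lam * w1 lam x = 0)
    (hw1ic : ∀ lam : ℝ, 0 < lam → w1 lam 0 = p1 ∧ w1' lam 0 = -Real.sqrt lam)
    :
    ∃ C : ℝ, 0 < C ∧ ∃ s0 : ℝ, 0 < s0 ∧ ∀ s : ℝ, s0 ≤ s → ∀ x ∈ Set.Icc (0:ℝ) (Real.pi/2),
      |w1 (s^2) x - Real.sqrt 2 * p1 * Real.cos (s * x / p1 + Real.pi/4)| ≤ C / s := by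
  obtain ⟨L, hL⟩ := hqlim1
  obtain ⟨Q, hQ⟩ := hqc1.exists_bound_Ico_of_tendsto hL
  have hQ0 : 0 ≤ Q := (norm_nonneg _).trans (hQ 0 ⟨le_rfl, by positivity⟩)
  refine ⟨2 * √2 * π * Q + 1, by positivity, 2 * π * Q / p1 + 1, by positivity,
    fun s hs x hx => ?_⟩
  have hs' : 4 * (π / 2) * Q / p1 < s := by
    rw [show 4 * (π / 2) * Q / p1 = 2 * π * Q / p1 by ring]; linarith
  have hs0 : 0 < s := lt_of_le_of_lt (by positivity) hs'
  have hlam : 0 < s ^ 2 := by positivity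
  have hτ : ∀ y ∈ Ico 0 (π / 2), y - Δ y ∈ Icc 0 (π / 2) := fun y hy =>
    ⟨hret1 y hy, by linarith [hy.2, hΔnonneg y (Or.inl hy)]⟩
  calc _ ≤ 4 * √2 * (π / 2) * Q / s :=
        abs_sub_cos_le_of_delay_ode hp1 hQ0 (fun y hy => (norm_eq_abs (q y)) ▸ hQ y hy) hs' hτ
          (hw1d _ hlam) (hw1eq _ hlam) (hw1ic _ hlam).1
          (by rw [(hw1ic _ hlam).2, sqrt_sq hs0.le]) x hx
    _ ≤ (2 * √2 * π * Q + 1) / s := by gcongr; linarith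

theorem stmt8
    (p1 p2 γ1 γ2 δ1 δ2 d : ℝ) (q Δ : ℝ → ℝ)
    (hp1 : 0 < p1) (hp2 : 0 < p2)
    (hδ1 : δ1 ≠ 0) (hδ2 : δ2 ≠ 0)
    (hγδ : γ1 * δ2 * p1 = γ2 * δ1 * p2)
    (hqc1 : ContinuousOn q (Set.Ico 0 (Real.pi/2)))
    (hqc2 : ContinuousOn q (Set.Ioc (Real.pi/2) Real.pi))
    (hqlim1 : ∃ L : ℝ, Filter.Tendsto q (nhdsWithin (Real.pi/2) (Set.Iio (Real.pi/2))) (nhds L))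
    (hqlim2 : ∃ L : ℝ, Filter.Tendsto q (nhdsWithin (Real.pi/2) (Set.Ioi (Real.pi/2))) (nhds L))
    (hΔc1 : ContinuousOn Δ (Set.Ico 0 (Real.pi/2)))
    (hΔc2 : ContinuousOn Δ (Set.Ioc (Real.pi/2) Real.pi))
    (hΔlim1 : ∃ L : ℝ, Filter.Tendsto Δ (nhdsWithin (Real.pi/2) (Set.Iio (Real.pi/2))) (nhds L))
    (hΔlim2 : ∃ L : ℝ, Filter.Tendsto Δ (nhdsWithin (Real.pi/2) (Set.Ioi (Real.pi/2))) (nhds L))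
    (hΔnonneg : ∀ x ∈ Set.Ico (0:ℝ) (Real.pi/2) ∪ Set.Ioc (Real.pi/2) Real.pi, 0 ≤ Δ x)
    (hret1 : ∀ x ∈ Set.Ico (0:ℝ) (Real.pi/2), 0 ≤ x - Δ x)
    (hret2 : ∀ x ∈ Set.Ioc (Real.pi/2) Real.pi, Real.pi/2 ≤ x - Δ x)
    (w1 w1' w1'' : ℝ → ℝ → ℝ)
    (hw1d : ∀ lam : ℝ, 0 < lam → ∀ x ∈ Set.Icc (0:ℝ) (Real.pi/2),
      HasDerivAt (w1 lam) (w1' lam x) x ∧ HasDerivAt (w1' lam) (w1'' lam x) x)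
    (hw1eq : ∀ lam : ℝ, 0 < lam → ∀ x ∈ Set.Icc (0:ℝ) (Real.pi/2),
      p1^2 * w1'' lam x + q x * w1 lam (x - Δ x) + lam * w1 lam x = 0)
    (hw1ic : ∀ lam : ℝ, 0 < lam → w1 lam 0 = p1 ∧ w1' lam 0 = -Real.sqrt lam)
    :
    ∃ C : ℝ, 0 < C ∧ ∃ s0 : ℝ, 0 < s0 ∧ ∀ s : ℝ, s0 ≤ s → ∀ x ∈ Set.Icc (0:ℝ) (Real.pi/2),
      |w1 (s^2) x - Real.sqrt 2 * p1 * Real.cos (s * x / p1 + Real.pi/4)| ≤ C / s :=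
  stmt8_general p1 q Δ hp1 hqc1 hqlim1 hΔnonneg hret1 w1 w1' w1'' hw1d hw1eq hw1ic
end

section
/- (Asymptotics (27) for w₂.) There exist constants C > 0 and s₀ > 0 such that for all s ≥ s₀ and all x ∈ [π/2,π], |w₂(x,s²) − (√2·γ₁·p₁/δ₁)·cos( s·π(p₂−p₁)/(2p₁p₂) + s·x/p₂ + π/4 )| ≤ C/s. -/
/-!
On a segment where `p² w'' + s² w = g`, variation of constants writes
`w = C cos (s x / p) + S sin (s x / p)` and `p / s * w' = -C sin (s x / p) + S cos (s x / p)`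
with `|C'|, |S'| ≤ |g| / (p s)`. For the retarded term `g = -q x * w (x - Δ x)` the delayed
argument stays in the same segment, so `|g| ≤ Q * max |w|`; absorbing this `O(max |w| / s)` error
into `max |w|` shows that on each segment `w` stays `O(1/s)`-close to the free oscillation with
the same initial data. On `[0, π/2]` that oscillation is `√2 p₁ cos (s x / p₁ + π/4)`; by
`γ₁ δ₂ p₁ = γ₂ δ₁ p₂` the transmission conditions multiply the pair `(w, p / s * w')` by `γ₁ / δ₁`
at `π/2`, and the phases add up.
-/

open Set Filter Real Topology

lemma exists_abs_le_of_continuousOn_Ico {f : ℝ → ℝ} {a b L : ℝ} (hf : ContinuousOn f (Ico a b))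
    (hb : Tendsto f (𝓝[<] b) (𝓝 L)) : ∃ Q, 0 ≤ Q ∧ ∀ x ∈ Ico a b, |f x| ≤ Q := by
  obtain ⟨c, hcb, hc⟩ :=
    mem_nhdsLT_iff_exists_Ioo_subset.1 (hb.abs.eventually_lt_const (lt_add_one |L|))
  obtain ⟨R, hR⟩ := isCompact_Icc.exists_bound_of_continuousOn (hf.mono (Icc_subset_Ico_right hcb))
  refine ⟨max R (|L| + 1), le_max_of_le_right (by positivity), fun x hx => ?_⟩
  rcases le_or_gt x c with hxc | hxc
  · exact (hR x ⟨hx.1, hxc⟩).trans (le_max_left _ _)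
  · exact (hc ⟨hxc, hx.2⟩).le.trans (le_max_right _ _)

lemma exists_abs_le_of_continuousOn_Ioc {f : ℝ → ℝ} {a b L : ℝ} (hf : ContinuousOn f (Ioc a b))
    (ha : Tendsto f (𝓝[>] a) (𝓝 L)) : ∃ Q, 0 ≤ Q ∧ ∀ x ∈ Ioc a b, |f x| ≤ Q := by
  obtain ⟨c, hac, hc⟩ :=
    mem_nhdsGT_iff_exists_Ioo_subset.1 (ha.abs.eventually_lt_const (lt_add_one |L|))
  obtain ⟨R, hR⟩ := isCompact_Icc.exists_bound_of_continuousOn (hf.mono (Icc_subset_Ioc_left hac))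
  refine ⟨max R (|L| + 1), le_max_of_le_right (by positivity), fun x hx => ?_⟩
  rcases le_or_gt c x with hcx | hcx
  · exact (hR x ⟨hcx, hx.2⟩).trans (le_max_left _ _)
  · exact (hc ⟨hx.1, hcx⟩).le.trans (le_max_right _ _)

lemma abs_sub_le_of_hasDerivAt_of_abs_le {f f' : ℝ → ℝ} {a b C : ℝ} (hab : a ≤ b)
    (hf : ∀ x ∈ Icc a b, HasDerivAt f (f' x) x) (hC : ∀ x ∈ Ioo a b, |f' x| ≤ C) :
    |f b - f a| ≤ C * (b - a) := by
  rcases hab.eq_or_lt with rfl | hab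
  · simp
  obtain ⟨c, hc, hslope⟩ := exists_hasDerivAt_eq_slope f f' hab
    (fun x hx => (hf x hx).continuousAt.continuousWithinAt)
    (fun x hx => hf x (Ioo_subset_Icc_self hx))
  rw [eq_div_iff (sub_ne_zero.2 hab.ne')] at hslope
  rw [← hslope, abs_mul, abs_of_pos (sub_pos.2 hab)]
  exact mul_le_mul_of_nonneg_right (hC c hc) (sub_pos.2 hab).le

lemma abs_mul_add_mul_le_of_abs_le_one {a b c d : ℝ} (hc : |c| ≤ 1) (hd : |d| ≤ 1) :
    |a * c + b * d| ≤ |a| + |b| := by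
  calc |a * c + b * d| ≤ |a| * |c| + |b| * |d| := by
        simpa only [abs_mul] using abs_add_le (a * c) (b * d)
    _ ≤ |a| * 1 + |b| * 1 := by gcongr
    _ = |a| + |b| := by ring

section VariationOfConstants

variable (p s : ℝ) (w w' : ℝ → ℝ)

noncomputable def cosCoeff (t : ℝ) : ℝ := w t * cos (s * t / p) - p / s * w' t * sin (s * t / p)

noncomputable def sinCoeff (t : ℝ) : ℝ := w t * sin (s * t / p) + p / s * w' t * cos (s * t / p)

variable {p s w w'}

lemma hasDerivAt_cosCoeff {t w'' : ℝ} (hp : p ≠ 0) (hs : s ≠ 0) (hw : HasDerivAt w (w' t) t)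
    (hw' : HasDerivAt w' w'' t) :
    HasDerivAt (cosCoeff p s w w')
      (-(sin (s * t / p) * (p ^ 2 * w'' + s ^ 2 * w t)) / (p * s)) t := by
  have hθ : HasDerivAt (fun t => s * t / p) (s / p) t := by
    simpa using ((hasDerivAt_id t).const_mul s).div_const p
  refine ((hw.mul hθ.cos).sub ((hw'.const_mul (p / s)).mul hθ.sin)).congr_deriv ?_
  field_simp
  ring

lemma hasDerivAt_sinCoeff {t w'' : ℝ} (hp : p ≠ 0) (hs : s ≠ 0) (hw : HasDerivAt w (w' t) t)
    (hw' : HasDerivAt w' w'' t) :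
    HasDerivAt (sinCoeff p s w w')
      (cos (s * t / p) * (p ^ 2 * w'' + s ^ 2 * w t) / (p * s)) t := by
  have hθ : HasDerivAt (fun t => s * t / p) (s / p) t := by
    simpa using ((hasDerivAt_id t).const_mul s).div_const p
  refine ((hw.mul hθ.sin).add ((hw'.const_mul (p / s)).mul hθ.cos)).congr_deriv ?_
  field_simp
  ring

lemma sub_free_eq (a x : ℝ) :
    w x - (w a * cos (s * (x - a) / p) + p / s * w' a * sin (s * (x - a) / p)) =
      (cosCoeff p s w w' x - cosCoeff p s w w' a) * cos (s * x / p) +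
        (sinCoeff p s w w' x - sinCoeff p s w w' a) * sin (s * x / p) := by
  rw [show s * (x - a) / p = s * x / p - s * a / p by ring, cos_sub, sin_sub]
  simp only [cosCoeff, sinCoeff]
  linear_combination (-w x) * sin_sq_add_cos_sq (s * x / p)

lemma sub_free_deriv_eq (a x : ℝ) :
    p / s * w' x - (-(w a * sin (s * (x - a) / p)) + p / s * w' a * cos (s * (x - a) / p)) =
      -((cosCoeff p s w w' x - cosCoeff p s w w' a) * sin (s * x / p)) +
        (sinCoeff p s w w' x - sinCoeff p s w w' a) * cos (s * x / p) := by
  rw [show s * (x - a) / p = s * x / p - s * a / p by ring, cos_sub, sin_sub]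
  simp only [cosCoeff, sinCoeff]
  linear_combination (-(p / s * w' x)) * sin_sq_add_cos_sq (s * x / p)

end VariationOfConstants

lemma abs_sub_free_le {p s a b G : ℝ} {w w' w'' : ℝ → ℝ} (hp : 0 < p) (hs : 0 < s) (hG0 : 0 ≤ G)
    (hd : ∀ x ∈ Icc a b, HasDerivAt w (w' x) x ∧ HasDerivAt w' (w'' x) x)
    (hG : ∀ x ∈ Ioo a b, |p ^ 2 * w'' x + s ^ 2 * w x| ≤ G) {x : ℝ} (hx : x ∈ Icc a b) :
    |w x - (w a * cos (s * (x - a) / p) + p / s * w' a * sin (s * (x - a) / p))| ≤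
        2 * G * (b - a) / (p * s) ∧
      |p / s * w' x - (-(w a * sin (s * (x - a) / p)) + p / s * w' a * cos (s * (x - a) / p))| ≤
        2 * G * (b - a) / (p * s) := by
  have hps : 0 < p * s := mul_pos hp hs
  have hsub : Icc a x ⊆ Icc a b := Icc_subset_Icc_right hx.2
  have hderiv_le : ∀ {c : ℝ}, |c| ≤ 1 → ∀ y ∈ Ioo a x,
      |c * (p ^ 2 * w'' y + s ^ 2 * w y) / (p * s)| ≤ G / (p * s) := by
    intro c hc y hy
    rw [abs_div, abs_mul, abs_of_pos hps]
    gcongr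
    calc |c| * |p ^ 2 * w'' y + s ^ 2 * w y| ≤ 1 * G := by
          gcongr; exact hG y ⟨hy.1, hy.2.trans_le hx.2⟩
      _ = G := one_mul G
  have hC := abs_sub_le_of_hasDerivAt_of_abs_le hx.1
    (fun y hy => hasDerivAt_cosCoeff hp.ne' hs.ne' (hd y (hsub hy)).1 (hd y (hsub hy)).2)
    (fun y hy => by rw [neg_div, abs_neg]; exact hderiv_le (abs_sin_le_one _) y hy)
  have hS := abs_sub_le_of_hasDerivAt_of_abs_le hx.1
    (fun y hy => hasDerivAt_sinCoeff hp.ne' hs.ne' (hd y (hsub hy)).1 (hd y (hsub hy)).2)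
    (fun y hy => hderiv_le (abs_cos_le_one _) y hy)
  have hsum : |cosCoeff p s w w' x - cosCoeff p s w w' a| +
      |sinCoeff p s w w' x - sinCoeff p s w w' a| ≤ 2 * G * (b - a) / (p * s) := by
    calc _ ≤ G / (p * s) * (x - a) + G / (p * s) * (x - a) := add_le_add hC hS
      _ ≤ G / (p * s) * (b - a) + G / (p * s) * (b - a) := by gcongr <;> exact hx.2
      _ = 2 * G * (b - a) / (p * s) := by ring
  rw [sub_free_eq, sub_free_deriv_eq, neg_mul_eq_mul_neg]
  exact ⟨(abs_mul_add_mul_le_of_abs_le_one (abs_cos_le_one _) (abs_sin_le_one _)).trans hsum,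
    (abs_mul_add_mul_le_of_abs_le_one (by rw [abs_neg]; exact abs_sin_le_one _)
      (abs_cos_le_one _)).trans hsum⟩

theorem abs_sub_free_le_of_retarded {p s a b Q : ℝ} {q τ w w' w'' : ℝ → ℝ} (hp : 0 < p)
    (hs : 0 < s) (hQ : 0 ≤ Q) (hq : ∀ x ∈ Ioo a b, |q x| ≤ Q)
    (hτ : ∀ x ∈ Ioo a b, a ≤ τ x ∧ τ x ≤ x) (hsQ : 4 * Q * (b - a) ≤ p * s)
    (hd : ∀ x ∈ Icc a b, HasDerivAt w (w' x) x ∧ HasDerivAt w' (w'' x) x)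
    (heq : ∀ x ∈ Icc a b, p ^ 2 * w'' x + q x * w (τ x) + s ^ 2 * w x = 0)
    {x : ℝ} (hx : x ∈ Icc a b) :
    |w x - (w a * cos (s * (x - a) / p) + p / s * w' a * sin (s * (x - a) / p))| ≤
        4 * Q * (b - a) * (|w a| + |p / s * w' a|) / (p * s) ∧
      |p / s * w' x - (-(w a * sin (s * (x - a) / p)) + p / s * w' a * cos (s * (x - a) / p))| ≤
        4 * Q * (b - a) * (|w a| + |p / s * w' a|) / (p * s) ∧
      |w x| + |p / s * w' x| ≤ 4 * (|w a| + |p / s * w' a|) := by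
  have hab : a ≤ b := hx.1.trans hx.2
  have hps : 0 < p * s := mul_pos hp hs
  obtain ⟨z, hz, hmax⟩ := isCompact_Icc.exists_isMaxOn ⟨a, left_mem_Icc.2 hab⟩
    (continuousOn_of_forall_continuousAt fun y hy => (hd y hy).1.continuousAt).abs
  set M := |w z|
  set N := |w a| + |p / s * w' a|
  have hG : ∀ y ∈ Ioo a b, |p ^ 2 * w'' y + s ^ 2 * w y| ≤ Q * M := by
    intro y hy
    rw [show p ^ 2 * w'' y + s ^ 2 * w y = -(q y * w (τ y)) by
      linarith [heq y (Ioo_subset_Icc_self hy)], abs_neg, abs_mul]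
    exact mul_le_mul (hq y hy) (hmax ⟨(hτ y hy).1, (hτ y hy).2.trans hy.2.le⟩) (abs_nonneg _) hQ
  have hclose := fun y (hy : y ∈ Icc a b) =>
    abs_sub_free_le hp hs (mul_nonneg hQ (abs_nonneg _)) hd hG hy
  have hM : M ≤ 2 * N := by
    have hfree : |w a * cos (s * (z - a) / p) + p / s * w' a * sin (s * (z - a) / p)| ≤ N :=
      abs_mul_add_mul_le_of_abs_le_one (abs_cos_le_one _) (abs_sin_le_one _)
    have hsmall : 2 * (Q * M) * (b - a) / (p * s) ≤ M / 2 := by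
      rw [div_le_iff₀ hps]
      nlinarith [abs_nonneg (w z)]
    linarith [(abs_sub_abs_le_abs_sub (w z) _).trans (hclose z hz).1]
  have hε : 2 * (Q * M) * (b - a) / (p * s) ≤ 4 * Q * (b - a) * N / (p * s) := by
    refine div_le_div_of_nonneg_right ?_ hps.le
    nlinarith [mul_nonneg hQ (sub_nonneg.2 hab)]
  have hεN : 4 * Q * (b - a) * N / (p * s) ≤ N := by
    rw [div_le_iff₀ hps]
    nlinarith [abs_nonneg (w a), abs_nonneg (p / s * w' a)]
  have hu := (hclose x hx).1.trans hε
  have hv := (hclose x hx).2.trans hε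
  have hfree := abs_mul_add_mul_le_of_abs_le_one (a := w a) (b := p / s * w' a)
    (abs_cos_le_one (s * (x - a) / p)) (abs_sin_le_one (s * (x - a) / p))
  have hfree' := abs_mul_add_mul_le_of_abs_le_one (a := -w a) (b := p / s * w' a)
    (abs_sin_le_one (s * (x - a) / p)) (abs_cos_le_one (s * (x - a) / p))
  rw [abs_neg, neg_mul] at hfree'
  refine ⟨hu, hv, ?_⟩
  linarith [(abs_sub_abs_le_abs_sub (w x) _).trans hu,
    (abs_sub_abs_le_abs_sub (p / s * w' x) _).trans hv]

lemma sqrt_two_mul_cos_add_add_pi_div_four (α φ : ℝ) :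
    √2 * cos (α + φ + π / 4) = (cos α - sin α) * cos φ - (sin α + cos α) * sin φ := by
  rw [cos_add, sin_add, cos_add, cos_pi_div_four, sin_pi_div_four]
  linear_combination ((cos α * cos φ - sin α * sin φ) - (sin α * cos φ + cos α * sin φ)) / 2 *
    Real.mul_self_sqrt (zero_le_two : (0 : ℝ) ≤ 2)

/-- `(u, v)` approximates the data of `p √2 cos (θ + α + π / 4)` at `θ = 0`, and `y` is the
free oscillation issued from `ρ • (u, v)`, evaluated at phase `φ`. -/
lemma abs_sub_sqrt_two_mul_cos_le {p α φ u v y ρ ε η : ℝ}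
    (hu : |u - (p * cos α + -p * sin α)| ≤ ε) (hv : |v - (-(p * sin α) + -p * cos α)| ≤ ε)
    (hy : |y - (ρ * u * cos φ + ρ * v * sin φ)| ≤ η) :
    |y - √2 * ρ * p * cos (α + φ + π / 4)| ≤ η + 2 * |ρ| * ε := by
  have hF : √2 * ρ * p * cos (α + φ + π / 4) =
      ρ * ((p * cos α + -p * sin α) * cos φ + (-(p * sin α) + -p * cos α) * sin φ) := by
    linear_combination ρ * p * sqrt_two_mul_cos_add_add_pi_div_four α φ
  have hρ : |ρ * ((u - (p * cos α + -p * sin α)) * cos φ +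
      (v - (-(p * sin α) + -p * cos α)) * sin φ)| ≤ |ρ| * (ε + ε) := by
    rw [abs_mul]
    gcongr
    exact (abs_mul_add_mul_le_of_abs_le_one (abs_cos_le_one _) (abs_sin_le_one _)).trans
      (add_le_add hu hv)
  calc |y - √2 * ρ * p * cos (α + φ + π / 4)|
      = |(y - (ρ * u * cos φ + ρ * v * sin φ)) + ρ * ((u - (p * cos α + -p * sin α)) * cos φ +
          (v - (-(p * sin α) + -p * cos α)) * sin φ)| := by rw [hF]; congr 1; ring
    _ ≤ η + |ρ| * (ε + ε) := (abs_add_le _ _).trans (add_le_add hy hρ)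
    _ = η + 2 * |ρ| * ε := by ring

theorem stmt10_general
    (p1 p2 γ1 γ2 δ1 δ2 : ℝ) (q Δ : ℝ → ℝ)
    (hp1 : 0 < p1) (hp2 : 0 < p2)
    (hδ1 : δ1 ≠ 0) (hδ2 : δ2 ≠ 0)
    (hγδ : γ1 * δ2 * p1 = γ2 * δ1 * p2)
    (hqc1 : ContinuousOn q (Set.Ico 0 (Real.pi/2)))
    (hqc2 : ContinuousOn q (Set.Ioc (Real.pi/2) Real.pi))
    (hqlim1 : ∃ L : ℝ, Filter.Tendsto q (nhdsWithin (Real.pi/2) (Set.Iio (Real.pi/2))) (nhds L))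
    (hqlim2 : ∃ L : ℝ, Filter.Tendsto q (nhdsWithin (Real.pi/2) (Set.Ioi (Real.pi/2))) (nhds L))
    (hΔnonneg : ∀ x ∈ Set.Ico (0:ℝ) (Real.pi/2) ∪ Set.Ioc (Real.pi/2) Real.pi, 0 ≤ Δ x)
    (hret1 : ∀ x ∈ Set.Ico (0:ℝ) (Real.pi/2), 0 ≤ x - Δ x)
    (hret2 : ∀ x ∈ Set.Ioc (Real.pi/2) Real.pi, Real.pi/2 ≤ x - Δ x)
    (w1 w1' w1'' : ℝ → ℝ → ℝ)
    (hw1d : ∀ lam : ℝ, 0 < lam → ∀ x ∈ Set.Icc (0:ℝ) (Real.pi/2),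
      HasDerivAt (w1 lam) (w1' lam x) x ∧ HasDerivAt (w1' lam) (w1'' lam x) x)
    (hw1eq : ∀ lam : ℝ, 0 < lam → ∀ x ∈ Set.Icc (0:ℝ) (Real.pi/2),
      p1^2 * w1'' lam x + q x * w1 lam (x - Δ x) + lam * w1 lam x = 0)
    (hw1ic : ∀ lam : ℝ, 0 < lam → w1 lam 0 = p1 ∧ w1' lam 0 = -Real.sqrt lam)
    (w2 w2' w2'' : ℝ → ℝ → ℝ)
    (hw2d : ∀ lam : ℝ, 0 < lam → ∀ x ∈ Set.Icc (Real.pi/2) Real.pi,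
      HasDerivAt (w2 lam) (w2' lam x) x ∧ HasDerivAt (w2' lam) (w2'' lam x) x)
    (hw2eq : ∀ lam : ℝ, 0 < lam → ∀ x ∈ Set.Icc (Real.pi/2) Real.pi,
      p2^2 * w2'' lam x + q x * w2 lam (x - Δ x) + lam * w2 lam x = 0)
    (hw2ic : ∀ lam : ℝ, 0 < lam →
      w2 lam (Real.pi/2) = (γ1/δ1) * w1 lam (Real.pi/2) ∧
      w2' lam (Real.pi/2) = (γ2/δ2) * w1' lam (Real.pi/2))
    :
    ∃ C : ℝ, 0 < C ∧ ∃ s0 : ℝ, 0 < s0 ∧ ∀ s : ℝ, s0 ≤ s → ∀ x ∈ Set.Icc (Real.pi/2) Real.pi,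
      |w2 (s^2) x - (Real.sqrt 2 * γ1 * p1 / δ1) *
        Real.cos (s * Real.pi * (p2 - p1) / (2*p1*p2) + s * x / p2 + Real.pi/4)| ≤ C / s := by
  obtain ⟨L1, hL1⟩ := hqlim1
  obtain ⟨L2, hL2⟩ := hqlim2
  obtain ⟨Q1, hQ1, hq1⟩ := exists_abs_le_of_continuousOn_Ico hqc1 hL1
  obtain ⟨Q2, hQ2, hq2⟩ := exists_abs_le_of_continuousOn_Ioc hqc2 hL2
  refine ⟨4 * π * |γ1 / δ1| * (2 * Q1 + 4 * p1 * Q2 / p2) + 1, by positivity,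
    1 + 2 * π * Q1 / p1 + 2 * π * Q2 / p2, by positivity, fun s hs x hx => ?_⟩
  have hs0 : 0 < s := lt_of_lt_of_le (by positivity) hs
  have hsQ1 : 4 * Q1 * (π / 2 - 0) ≤ p1 * s := by
    rw [← div_le_iff₀' hp1]
    linarith [show 4 * Q1 * (π / 2 - 0) / p1 = 2 * π * Q1 / p1 by ring,
      show 0 ≤ 2 * π * Q2 / p2 by positivity]
  have hsQ2 : 4 * Q2 * (π - π / 2) ≤ p2 * s := by
    rw [← div_le_iff₀' hp2]
    linarith [show 4 * Q2 * (π - π / 2) / p2 = 2 * π * Q2 / p2 by ring,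
      show 0 ≤ 2 * π * Q1 / p1 by positivity]
  have hlam : 0 < s ^ 2 := by positivity
  obtain ⟨hw1_0, hw1'_0⟩ := hw1ic _ hlam
  obtain ⟨hw2_0, hw2'_0⟩ := hw2ic _ hlam
  obtain ⟨hu, hv, huv⟩ := abs_sub_free_le_of_retarded hp1 hs0 hQ1
    (fun y hy => hq1 y (Ioo_subset_Ico_self hy))
    (fun y hy => ⟨hret1 y (Ioo_subset_Ico_self hy),
      sub_le_self _ (hΔnonneg y (Or.inl (Ioo_subset_Ico_self hy)))⟩)
    hsQ1 (hw1d _ hlam) (hw1eq _ hlam) (x := π / 2) ⟨by positivity, le_rfl⟩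
  have hw := (abs_sub_free_le_of_retarded hp2 hs0 hQ2
    (fun y hy => hq2 y (Ioo_subset_Ioc_self hy))
    (fun y hy => ⟨hret2 y (Ioo_subset_Ioc_self hy),
      sub_le_self _ (hΔnonneg y (Or.inr (Ioo_subset_Ioc_self hy)))⟩)
    hsQ2 (hw2d _ hlam) (hw2eq _ hlam) hx).1
  have hslope : p1 / s * w1' (s ^ 2) 0 = -p1 := by
    rw [hw1'_0, sqrt_sq hs0.le]; field_simp
  have hinterface : p2 / s * w2' (s ^ 2) (π / 2) = γ1 / δ1 * (p1 / s * w1' (s ^ 2) (π / 2)) := by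
    rw [hw2'_0]; field_simp; linear_combination (-w1' (s ^ 2) (π / 2)) * hγδ
  rw [hw1_0, hslope, abs_neg, abs_of_pos hp1] at hu hv huv
  rw [hinterface, hw2_0] at hw
  have hphase : √2 * γ1 * p1 / δ1 * cos (s * π * (p2 - p1) / (2 * p1 * p2) + s * x / p2 + π / 4) =
      √2 * (γ1 / δ1) * p1 * cos (s * (π / 2 - 0) / p1 + s * (x - π / 2) / p2 + π / 4) := by
    rw [show s * π * (p2 - p1) / (2 * p1 * p2) + s * x / p2 =
      s * (π / 2 - 0) / p1 + s * (x - π / 2) / p2 by field_simp; ring]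
    ring
  have hQ2π : 0 ≤ 4 * Q2 * (π - π / 2) := mul_nonneg (by positivity) (by linarith [pi_pos])
  rw [hphase]
  calc _ ≤ _ := abs_sub_sqrt_two_mul_cos_le hu hv hw
    _ ≤ 4 * Q2 * (π - π / 2) * (|γ1 / δ1| * (4 * (p1 + p1))) / (p2 * s) +
          2 * |γ1 / δ1| * (4 * Q1 * (π / 2 - 0) * (p1 + p1) / (p1 * s)) := by
      rw [abs_mul, abs_mul, ← mul_add]
      gcongr
    _ = 4 * π * |γ1 / δ1| * (2 * Q1 + 4 * p1 * Q2 / p2) / s := by field_simp; ring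
    _ ≤ _ := by gcongr; linarith

theorem stmt10
    (p1 p2 γ1 γ2 δ1 δ2 d : ℝ) (q Δ : ℝ → ℝ)
    (hp1 : 0 < p1) (hp2 : 0 < p2)
    (hδ1 : δ1 ≠ 0) (hδ2 : δ2 ≠ 0)
    (hγδ : γ1 * δ2 * p1 = γ2 * δ1 * p2)
    (hqc1 : ContinuousOn q (Set.Ico 0 (Real.pi/2)))
    (hqc2 : ContinuousOn q (Set.Ioc (Real.pi/2) Real.pi))
    (hqlim1 : ∃ L : ℝ, Filter.Tendsto q (nhdsWithin (Real.pi/2) (Set.Iio (Real.pi/2))) (nhds L))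
    (hqlim2 : ∃ L : ℝ, Filter.Tendsto q (nhdsWithin (Real.pi/2) (Set.Ioi (Real.pi/2))) (nhds L))
    (hΔc1 : ContinuousOn Δ (Set.Ico 0 (Real.pi/2)))
    (hΔc2 : ContinuousOn Δ (Set.Ioc (Real.pi/2) Real.pi))
    (hΔlim1 : ∃ L : ℝ, Filter.Tendsto Δ (nhdsWithin (Real.pi/2) (Set.Iio (Real.pi/2))) (nhds L))
    (hΔlim2 : ∃ L : ℝ, Filter.Tendsto Δ (nhdsWithin (Real.pi/2) (Set.Ioi (Real.pi/2))) (nhds L))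
    (hΔnonneg : ∀ x ∈ Set.Ico (0:ℝ) (Real.pi/2) ∪ Set.Ioc (Real.pi/2) Real.pi, 0 ≤ Δ x)
    (hret1 : ∀ x ∈ Set.Ico (0:ℝ) (Real.pi/2), 0 ≤ x - Δ x)
    (hret2 : ∀ x ∈ Set.Ioc (Real.pi/2) Real.pi, Real.pi/2 ≤ x - Δ x)
    (w1 w1' w1'' : ℝ → ℝ → ℝ)
    (hw1d : ∀ lam : ℝ, 0 < lam → ∀ x ∈ Set.Icc (0:ℝ) (Real.pi/2),
      HasDerivAt (w1 lam) (w1' lam x) x ∧ HasDerivAt (w1' lam) (w1'' lam x) x)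
    (hw1eq : ∀ lam : ℝ, 0 < lam → ∀ x ∈ Set.Icc (0:ℝ) (Real.pi/2),
      p1^2 * w1'' lam x + q x * w1 lam (x - Δ x) + lam * w1 lam x = 0)
    (hw1ic : ∀ lam : ℝ, 0 < lam → w1 lam 0 = p1 ∧ w1' lam 0 = -Real.sqrt lam)
    (w2 w2' w2'' : ℝ → ℝ → ℝ)
    (hw2d : ∀ lam : ℝ, 0 < lam → ∀ x ∈ Set.Icc (Real.pi/2) Real.pi,
      HasDerivAt (w2 lam) (w2' lam x) x ∧ HasDerivAt (w2' lam) (w2'' lam x) x)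
    (hw2eq : ∀ lam : ℝ, 0 < lam → ∀ x ∈ Set.Icc (Real.pi/2) Real.pi,
      p2^2 * w2'' lam x + q x * w2 lam (x - Δ x) + lam * w2 lam x = 0)
    (hw2ic : ∀ lam : ℝ, 0 < lam →
      w2 lam (Real.pi/2) = (γ1/δ1) * w1 lam (Real.pi/2) ∧
      w2' lam (Real.pi/2) = (γ2/δ2) * w1' lam (Real.pi/2))
    :
    ∃ C : ℝ, 0 < C ∧ ∃ s0 : ℝ, 0 < s0 ∧ ∀ s : ℝ, s0 ≤ s → ∀ x ∈ Set.Icc (Real.pi/2) Real.pi,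
      |w2 (s^2) x - (Real.sqrt 2 * γ1 * p1 / δ1) *
        Real.cos (s * Real.pi * (p2 - p1) / (2*p1*p2) + s * x / p2 + Real.pi/4)| ≤ C / s :=
  stmt10_general p1 p2 γ1 γ2 δ1 δ2 q Δ hp1 hp2 hδ1 hδ2 hγδ hqc1 hqc2 hqlim1 hqlim2 hΔnonneg hret1
    hret2 w1 w1' w1'' hw1d hw1eq hw1ic w2 w2' w2'' hw2d hw2eq hw2ic
end

section
/- (Oscillatory integral estimate (34), second interval.) Suppose q is differentiable with bounded derivative on (π/2,π] and Δ is twice differentiable with bounded second derivative on (π/2,π], with Δ′(x) ≤ 1 on (π/2,π] and lim_{x→π/2⁺} Δ(x) = 0. Then there exist C > 0 and s₀ > 0 such that for all s ≥ s₀ and all x ∈ [π/2,π]: |∫_{π/2}ˣ (√2·q(τ)/2)·cos( s(2τ−Δ(τ))/p₂ + π/4 ) dτ| ≤ C/s and |∫_{π/2}ˣ (√2·q(τ)/2)·sin( s(2τ−Δ(τ))/p₂ + π/4 ) dτ| ≤ C/s. -/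
/-! Write the phase as `s/p₂ · ψ + c` with `ψ τ = 2τ - Δ τ`, so that `ψ' = 2 - Δ' ≥ 1`.
Integrating by parts against `(sin ∘ φ)' = φ' · cos ∘ φ` turns `∫ g · cos ∘ φ` into the boundary
terms `g/φ' · sin ∘ φ` and the integral of `(g/φ')' · sin ∘ φ`; with `φ' ≥ s/p₂`, `|φ''| ≤ s M/p₂`
and `g`, `g'` bounded, all of them are `O(1/s)`. The sine integral is the cosine one with the phase
shifted by `-π/2`. Since the hypotheses hold only on `(π/2, π]`, the estimate is proved on `[a, x]`
for `a > π/2` and passed to `a → π/2` by continuity of the integral in its lower endpoint. -/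

open Set intervalIntegral MeasureTheory Real

theorem abs_le_abs_add_mul_of_hasDerivAt {f f' : ℝ → ℝ} {a b M : ℝ}
    (hf : ∀ x ∈ Ioc a b, HasDerivAt f (f' x) x) (hM : ∀ x ∈ Ioc a b, |f' x| ≤ M)
    {x : ℝ} (hx : x ∈ Ioc a b) : |f x| ≤ |f b| + M * (b - a) := by
  have hb : b ∈ Ioc a b := ⟨hx.1.trans_le hx.2, le_rfl⟩
  have hfx : |f x - f b| ≤ M * |x - b| :=
    (convex_Ioc a b).norm_image_sub_le_of_norm_hasDerivWithin_le
      (fun y hy => (hf y hy).hasDerivWithinAt) hM hb hx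
  have hxb : |x - b| ≤ b - a := by
    rw [abs_sub_comm, abs_of_nonneg (by linarith [hx.2])]; linarith [hx.1]
  have hM0 : 0 ≤ M := (abs_nonneg _).trans (hM b hb)
  calc |f x| ≤ |f b| + |f x - f b| := by linarith [abs_sub_abs_le_abs_sub (f x) (f b)]
    _ ≤ |f b| + M * (b - a) := by gcongr; exact hfx.trans (by gcongr)

theorem intervalIntegrable_of_hasDerivAt_of_abs_le {f f' : ℝ → ℝ} {a b C : ℝ}
    (hf : ∀ x ∈ uIcc a b, HasDerivAt f (f' x) x) (hC : ∀ x ∈ uIcc a b, |f' x| ≤ C) :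
    IntervalIntegrable f' volume a b := by
  have hderiv : ∀ x ∈ uIoc a b, deriv f x = f' x :=
    fun x hx => (hf x (uIoc_subset_uIcc hx)).deriv
  rw [intervalIntegrable_iff]
  refine IntegrableOn.of_bound measure_Ioc_lt_top ?_ C ?_
  · exact (aestronglyMeasurable_deriv f _).congr
      ((ae_restrict_iff' measurableSet_uIoc).2 (.of_forall hderiv))
  · exact (ae_restrict_iff' measurableSet_uIoc).2
      (.of_forall fun x hx => hC x (uIoc_subset_uIcc hx))

theorem abs_integral_le_of_forall_mem_Ioc {f : ℝ → ℝ} {a b B : ℝ} (hab : a < b)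
    (hf : IntervalIntegrable f volume a b) (h : ∀ c ∈ Ioc a b, |∫ t in c..b, f t| ≤ B) :
    |∫ t in a..b, f t| ≤ B := by
  have hcont : ContinuousOn (fun c => |∫ t in c..b, f t|) (Icc a b) := by
    simpa [uIcc_of_le hab.le] using
      (continuousOn_primitive_interval_left ((intervalIntegrable_iff').1 hf)).abs
  refine ContinuousWithinAt.closure_le (s := Ioc a b) (x := a)
    (f := fun c => |∫ t in c..b, f t|) ?_ ?_ continuousWithinAt_const h
  · rw [closure_Ioc hab.ne]; exact left_mem_Icc.2 hab.le
  · exact (hcont a (left_mem_Icc.2 hab.le)).mono Ioc_subset_Icc_self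

theorem abs_div_sub_mul_div_sq_le {x x' y d m G G' Φ : ℝ} (hm : 0 < m) (hmd : m ≤ d)
    (hx : |x| ≤ G) (hx' : |x'| ≤ G') (hy : |y| ≤ Φ) :
    |x' / d - x * y / d ^ 2| ≤ (G' + G * Φ / m) / m := by
  have hd : 0 < d := hm.trans_le hmd
  have hG : 0 ≤ G := (abs_nonneg _).trans hx
  have hG' : 0 ≤ G' := (abs_nonneg _).trans hx'
  have hΦ : 0 ≤ Φ := (abs_nonneg _).trans hy
  calc |x' / d - x * y / d ^ 2| ≤ |x' / d| + |x * y / d ^ 2| := abs_sub _ _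
    _ = |x'| / d + |x| * |y| / d ^ 2 := by
        rw [abs_div, abs_div, abs_mul, abs_of_pos hd, abs_of_pos (pow_pos hd 2)]
    _ ≤ G' / m + G * Φ / m ^ 2 := by gcongr
    _ = (G' + G * Φ / m) / m := by field_simp

theorem integral_mul_cos_comp_eq {g g' φ φ' φ'' : ℝ → ℝ} {a b C : ℝ} (hab : a ≤ b)
    (hg : ∀ t ∈ Icc a b, HasDerivAt g (g' t) t) (hφ : ∀ t ∈ Icc a b, HasDerivAt φ (φ' t) t)
    (hφ' : ∀ t ∈ Icc a b, HasDerivAt φ' (φ'' t) t) (hφ'0 : ∀ t ∈ Icc a b, φ' t ≠ 0)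
    (hC : ∀ t ∈ Icc a b, |g' t / φ' t - g t * φ'' t / φ' t ^ 2| ≤ C) :
    ∫ t in a..b, g t * cos (φ t) = g b / φ' b * sin (φ b) - g a / φ' a * sin (φ a) -
      ∫ t in a..b, (g' t / φ' t - g t * φ'' t / φ' t ^ 2) * sin (φ t) := by
  rw [← uIcc_of_le hab] at hg hφ hφ' hφ'0 hC
  have hu : ∀ t ∈ uIcc a b, HasDerivAt (fun t => g t / φ' t)
      (g' t / φ' t - g t * φ'' t / φ' t ^ 2) t := fun t ht =>
    ((hg t ht).div (hφ' t ht) (hφ'0 t ht)).congr_deriv (by field_simp [hφ'0 t ht])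
  have hv : ∀ t ∈ uIcc a b, HasDerivAt (fun t => sin (φ t)) (cos (φ t) * φ' t) t :=
    fun t ht => (hasDerivAt_sin (φ t)).comp t (hφ t ht)
  have hv'_int : IntervalIntegrable (fun t => cos (φ t) * φ' t) volume a b :=
    ((continuous_cos.comp_continuousOn fun t ht => (hφ t ht).continuousAt.continuousWithinAt).mul
      fun t ht => (hφ' t ht).continuousAt.continuousWithinAt).intervalIntegrable
  rw [← integral_mul_deriv_eq_deriv_mul hu hv
    (intervalIntegrable_of_hasDerivAt_of_abs_le hu hC) hv'_int]
  refine integral_congr fun t ht => ?_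
  field_simp [hφ'0 t ht]

theorem abs_integral_mul_cos_comp_le_of_le_deriv {g g' φ φ' φ'' : ℝ → ℝ} {a b m G G' Φ : ℝ}
    (hab : a ≤ b) (hm : 0 < m)
    (hg : ∀ t ∈ Icc a b, HasDerivAt g (g' t) t) (hφ : ∀ t ∈ Icc a b, HasDerivAt φ (φ' t) t)
    (hφ' : ∀ t ∈ Icc a b, HasDerivAt φ' (φ'' t) t)
    (hgG : ∀ t ∈ Icc a b, |g t| ≤ G) (hg'G' : ∀ t ∈ Icc a b, |g' t| ≤ G')
    (hmφ' : ∀ t ∈ Icc a b, m ≤ φ' t) (hφ''Φ : ∀ t ∈ Icc a b, |φ'' t| ≤ Φ) :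
    |∫ t in a..b, g t * cos (φ t)| ≤ (2 * G + (b - a) * (G' + G * Φ / m)) / m := by
  set B := (G' + G * Φ / m) / m
  have hu'B : ∀ t ∈ Icc a b, |g' t / φ' t - g t * φ'' t / φ' t ^ 2| ≤ B := fun t ht =>
    abs_div_sub_mul_div_sq_le hm (hmφ' t ht) (hgG t ht) (hg'G' t ht) (hφ''Φ t ht)
  have hboundary : ∀ t ∈ Icc a b, |g t / φ' t * sin (φ t)| ≤ G / m := fun t ht => by
    have hφ't := hmφ' t ht
    have hφ't_pos : 0 < φ' t := hm.trans_le hφ't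
    rw [abs_mul, abs_div, abs_of_pos hφ't_pos]
    exact (mul_le_of_le_one_right (div_nonneg (abs_nonneg _) hφ't_pos.le) (abs_sin_le_one _)).trans
      (div_le_div₀ ((abs_nonneg _).trans (hgG t ht)) (hgG t ht) hm hφ't)
  have hrest : |∫ t in a..b, (g' t / φ' t - g t * φ'' t / φ' t ^ 2) * sin (φ t)| ≤
      B * (b - a) := by
    have := norm_integral_le_of_norm_le_const (a := a) (b := b) (C := B)
        (f := fun t => (g' t / φ' t - g t * φ'' t / φ' t ^ 2) * sin (φ t)) fun t ht => by
      rw [Real.norm_eq_abs, abs_mul]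
      exact (mul_le_of_le_one_right (abs_nonneg _) (abs_sin_le_one _)).trans
        (hu'B t (Ioc_subset_Icc_self (uIoc_of_le hab ▸ ht)))
    rwa [Real.norm_eq_abs, abs_of_nonneg (sub_nonneg.2 hab)] at this
  rw [integral_mul_cos_comp_eq hab hg hφ hφ' (fun t ht => (hm.trans_le (hmφ' t ht)).ne') hu'B]
  calc _ ≤ |g b / φ' b * sin (φ b)| + |g a / φ' a * sin (φ a)| +
          |∫ t in a..b, (g' t / φ' t - g t * φ'' t / φ' t ^ 2) * sin (φ t)| :=
        (abs_sub _ _).trans (add_le_add_left (abs_sub _ _) _)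
    _ ≤ G / m + G / m + B * (b - a) := by
        gcongr
        exacts [hboundary b (right_mem_Icc.2 hab), hboundary a (left_mem_Icc.2 hab)]
    _ = (2 * G + (b - a) * (G' + G * Φ / m)) / m := by ring

theorem abs_integral_mul_cos_smul_add_le {g g' ψ ψ' ψ'' : ℝ → ℝ} {a b μ G G' Ψ : ℝ}
    (hμ : 0 < μ) (hg : ∀ t ∈ Ioc a b, HasDerivAt g (g' t) t)
    (hψ : ∀ t ∈ Ioc a b, HasDerivAt ψ (ψ' t) t) (hψ' : ∀ t ∈ Ioc a b, HasDerivAt ψ' (ψ'' t) t)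
    (hgG : ∀ t ∈ Ioc a b, |g t| ≤ G) (hg'G' : ∀ t ∈ Ioc a b, |g' t| ≤ G')
    (hμψ' : ∀ t ∈ Ioc a b, μ ≤ ψ' t) (hψ''Ψ : ∀ t ∈ Ioc a b, |ψ'' t| ≤ Ψ)
    {s : ℝ} (hs : 0 < s) (c : ℝ) {x : ℝ} (hx : x ∈ Ioc a b) :
    |∫ t in a..x, g t * cos (s * ψ t + c)| ≤ (2 * G + (b - a) * (G' + G * Ψ / μ)) / (μ * s) := by
  have hIoc : Ioc a x ⊆ Ioc a b := Ioc_subset_Ioc_right hx.2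
  have hcont : ContinuousOn (fun t => g t * cos (s * ψ t + c)) (Ioc a x) := fun t ht =>
    ((hg t (hIoc ht)).continuousAt.mul (continuous_cos.continuousAt.comp
      (((hψ t (hIoc ht)).continuousAt.const_mul s).add_const c))).continuousWithinAt
  have hG : 0 ≤ G := (abs_nonneg _).trans (hgG x hx)
  have hint : IntervalIntegrable (fun t => g t * cos (s * ψ t + c)) volume a x := by
    rw [intervalIntegrable_iff_integrableOn_Ioc_of_le hx.1.le]
    refine IntegrableOn.of_bound measure_Ioc_lt_top
      (hcont.aestronglyMeasurable measurableSet_Ioc) G ?_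
    filter_upwards [ae_restrict_mem measurableSet_Ioc] with t ht
    rw [Real.norm_eq_abs, abs_mul]
    simpa using mul_le_mul (hgG t (hIoc ht)) (abs_cos_le_one _) (abs_nonneg _) hG
  have hG' : 0 ≤ G' := (abs_nonneg _).trans (hg'G' x hx)
  have hΨ : 0 ≤ Ψ := (abs_nonneg _).trans (hψ''Ψ x hx)
  refine abs_integral_le_of_forall_mem_Ioc hx.1 hint fun a' ha' => ?_
  have hIcc : Icc a' x ⊆ Ioc a b := fun t ht => ⟨ha'.1.trans_le ht.1, ht.2.trans hx.2⟩
  have hbound := abs_integral_mul_cos_comp_le_of_le_deriv (φ := fun t => s * ψ t + c)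
    (φ' := fun t => s * ψ' t) (φ'' := fun t => s * ψ'' t) ha'.2 (mul_pos hμ hs)
    (fun t ht => hg t (hIcc ht))
    (fun t ht => ((hψ t (hIcc ht)).const_mul s).add_const c)
    (fun t ht => (hψ' t (hIcc ht)).const_mul s)
    (fun t ht => hgG t (hIcc ht)) (fun t ht => hg'G' t (hIcc ht))
    (fun t ht => by rw [mul_comm]; exact mul_le_mul_of_nonneg_left (hμψ' t (hIcc ht)) hs.le)
    (fun t ht => by
      rw [abs_mul, abs_of_pos hs, mul_comm]
      exact mul_le_mul_of_nonneg_right (hψ''Ψ t (hIcc ht)) hs.le)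
  have hscale : G * (Ψ * s) / (μ * s) = G * Ψ / μ := by field_simp
  refine hbound.trans ?_
  rw [hscale]
  gcongr
  all_goals linarith [ha'.1, hx.2]

theorem stmt13_general
    (p2 : ℝ) (q Δ q' Δ' Δ'' : ℝ → ℝ)
    (hp2 : 0 < p2)
    (hq' : ∀ x ∈ Set.Ioc (Real.pi/2) Real.pi, HasDerivAt q (q' x) x)
    (hq'bdd : ∃ M : ℝ, ∀ x ∈ Set.Ioc (Real.pi/2) Real.pi, |q' x| ≤ M)
    (hΔ' : ∀ x ∈ Set.Ioc (Real.pi/2) Real.pi, HasDerivAt Δ (Δ' x) x)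
    (hΔ'' : ∀ x ∈ Set.Ioc (Real.pi/2) Real.pi, HasDerivAt Δ' (Δ'' x) x)
    (hΔ''bdd : ∃ M : ℝ, ∀ x ∈ Set.Ioc (Real.pi/2) Real.pi, |Δ'' x| ≤ M)
    (hΔ'le : ∀ x ∈ Set.Ioc (Real.pi/2) Real.pi, Δ' x ≤ 1)
    :
    ∃ C : ℝ, 0 < C ∧ ∃ s0 : ℝ, 0 < s0 ∧ ∀ s : ℝ, s0 ≤ s → ∀ x ∈ Set.Icc (Real.pi/2) Real.pi,
      |∫ τ in (Real.pi/2)..x, (Real.sqrt 2 * q τ / 2) * Real.cos (s*(2*τ - Δ τ)/p2 + Real.pi/4)| ≤ C / s ∧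
      |∫ τ in (Real.pi/2)..x, (Real.sqrt 2 * q τ / 2) * Real.sin (s*(2*τ - Δ τ)/p2 + Real.pi/4)| ≤ C / s := by
  obtain ⟨M1, hM1⟩ := hq'bdd
  obtain ⟨M2, hM2⟩ := hΔ''bdd
  have hg : ∀ τ ∈ Ioc (π / 2) π, HasDerivAt (fun τ => √2 * q τ / 2) (√2 * q' τ / 2) τ :=
    fun τ hτ => ((hq' τ hτ).const_mul _).div_const 2
  have hg' : ∀ τ ∈ Ioc (π / 2) π, |√2 * q' τ / 2| ≤ √2 * M1 / 2 := fun τ hτ => by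
    rw [abs_div, abs_mul, abs_of_nonneg (sqrt_nonneg 2), abs_two]
    gcongr
    exact hM1 τ hτ
  have hψ : ∀ τ ∈ Ioc (π / 2) π, HasDerivAt (fun τ => 2 * τ - Δ τ) (2 - Δ' τ) τ :=
    fun τ hτ => (((hasDerivAt_id τ).const_mul 2).sub (hΔ' τ hτ)).congr_deriv (by ring)
  have hψ' : ∀ τ ∈ Ioc (π / 2) π, HasDerivAt (fun τ => 2 - Δ' τ) (-Δ'' τ) τ :=
    fun τ hτ => (hΔ'' τ hτ).const_sub 2
  obtain ⟨C, hC⟩ : ∃ C, ∀ s > 0, ∀ c, ∀ x ∈ Ioc (π / 2) π,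
      |∫ τ in π / 2..x, √2 * q τ / 2 * cos (s / p2 * (2 * τ - Δ τ) + c)| ≤ C / s :=
    ⟨_, fun s hs c x hx => (abs_integral_mul_cos_smul_add_le one_pos hg hψ hψ'
      (fun τ hτ => abs_le_abs_add_mul_of_hasDerivAt hg hg' hτ) hg'
      (fun τ hτ => by linarith [hΔ'le τ hτ]) (fun τ hτ => (abs_neg _).trans_le (hM2 τ hτ))
      (div_pos hs hp2) c hx).trans_eq (by rw [one_mul, div_div_eq_mul_div])⟩
  refine ⟨max C 1, lt_max_of_lt_right one_pos, 1, one_pos, fun s hs x hx => ?_⟩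
  have hs0 : 0 < s := one_pos.trans_le hs
  rcases hx.1.eq_or_lt with rfl | hx'
  · have h0 : 0 ≤ max C 1 / s := div_nonneg (le_max_of_le_right zero_le_one) hs0.le
    simp only [integral_same, abs_zero]
    exact ⟨h0, h0⟩
  have hCmax : ∀ c, |∫ τ in π / 2..x, √2 * q τ / 2 * cos (s / p2 * (2 * τ - Δ τ) + c)| ≤
      max C 1 / s := fun c =>
    (hC s hs0 c x ⟨hx', hx.2⟩).trans (by gcongr; exact le_max_left C 1)
  simp only [mul_div_right_comm s, ← cos_sub_pi_div_two, add_sub_assoc]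
  exact ⟨hCmax _, hCmax _⟩

theorem stmt13
    (p2 : ℝ) (q Δ q' Δ' Δ'' : ℝ → ℝ)
    (hp2 : 0 < p2)
    (hqc : ContinuousOn q (Set.Ioc (Real.pi/2) Real.pi))
    (hqlim : ∃ L : ℝ, Filter.Tendsto q (nhdsWithin (Real.pi/2) (Set.Ioi (Real.pi/2))) (nhds L))
    (hΔc : ContinuousOn Δ (Set.Ioc (Real.pi/2) Real.pi))
    (hΔlim : ∃ L : ℝ, Filter.Tendsto Δ (nhdsWithin (Real.pi/2) (Set.Ioi (Real.pi/2))) (nhds L))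
    (hΔnonneg : ∀ x ∈ Set.Ioc (Real.pi/2) Real.pi, 0 ≤ Δ x)
    (hret : ∀ x ∈ Set.Ioc (Real.pi/2) Real.pi, Real.pi/2 ≤ x - Δ x)
    (hq' : ∀ x ∈ Set.Ioc (Real.pi/2) Real.pi, HasDerivAt q (q' x) x)
    (hq'bdd : ∃ M : ℝ, ∀ x ∈ Set.Ioc (Real.pi/2) Real.pi, |q' x| ≤ M)
    (hΔ' : ∀ x ∈ Set.Ioc (Real.pi/2) Real.pi, HasDerivAt Δ (Δ' x) x)
    (hΔ'' : ∀ x ∈ Set.Ioc (Real.pi/2) Real.pi, HasDerivAt Δ' (Δ'' x) x)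
    (hΔ''bdd : ∃ M : ℝ, ∀ x ∈ Set.Ioc (Real.pi/2) Real.pi, |Δ'' x| ≤ M)
    (hΔ'le : ∀ x ∈ Set.Ioc (Real.pi/2) Real.pi, Δ' x ≤ 1)
    (hΔrlim : Filter.Tendsto Δ (nhdsWithin (Real.pi/2) (Set.Ioi (Real.pi/2))) (nhds 0))
    :
    ∃ C : ℝ, 0 < C ∧ ∃ s0 : ℝ, 0 < s0 ∧ ∀ s : ℝ, s0 ≤ s → ∀ x ∈ Set.Icc (Real.pi/2) Real.pi,
      |∫ τ in (Real.pi/2)..x, (Real.sqrt 2 * q τ / 2) * Real.cos (s*(2*τ - Δ τ)/p2 + Real.pi/4)| ≤ C / s ∧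
      |∫ τ in (Real.pi/2)..x, (Real.sqrt 2 * q τ / 2) * Real.sin (s*(2*τ - Δ τ)/p2 + Real.pi/4)| ≤ C / s :=
  stmt13_general p2 q Δ q' Δ' Δ'' hp2 hq' hq'bdd hΔ' hΔ'' hΔ''bdd hΔ'le
end
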